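/- arXiv:1301.7718 — 9 statements merged into one kernel-verified Lean document; each statement's English description precedes it below -/
import Mathlib

section
/- For every real K ≥ 1 there exists a constant C = C(K) such that the following holds (Ruzsa's theorem in characteristic 2). Let G be an additive abelian group in which x + x = 0 for every x ∈ G, and let A ⊆ G be a finite nonempty set with |A + A| ≤ K·|A|. Then there exists a finite subgroup H of G with A ⊆ H and |H| ≤ C·|A|. -/
open Pointwise

/-- Ruzsa's theorem in characteristic 2: a finite set with doubling at most `K` in an
elementary abelian 2-group is contained in a finite subgroup of size `O_K(|A|)`. -/
theorem ruzsa_theorem_char_two (K : ℝ) (hK : 1 ≤ K) :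
    ∃ C : ℝ,
      ∀ (G : Type*) [AddCommGroup G] [DecidableEq G],
        (∀ x : G, x + x = 0) →
        ∀ A : Finset G, A.Nonempty → ((A + A).card : ℝ) ≤ K * A.card →
          ∃ H : AddSubgroup G, (H : Set G).Finite ∧ (↑A : Set G) ⊆ (H : Set G) ∧
            (((H : Set G).ncard : ℝ)) ≤ C * A.card := by
  classical
  refine ⟨(2 : ℝ) ^ (⌈K ^ 4⌉₊) * K, ?_⟩
  intro G _ _ h2 A hA hAA
  have hneg : ∀ x : G, -x = x := fun x => neg_eq_of_add_eq_zero_left (h2 x)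
  have hApos : (0 : ℝ) < (A.card : ℝ) := by
    exact_mod_cast Finset.card_pos.2 hA
  -- Plünnecke: |4A| ≤ K^4 |A|
  have hpl := Finset.pluennecke_ruzsa_inequality_nsmul_add hA A 4
  have h4e : (4 : ℕ) • A = A + A + A + A := by
    rw [succ_nsmul, succ_nsmul, succ_nsmul, one_nsmul]
  rw [h4e] at hpl
  have hplR := (NNRat.cast_le (K := ℝ)).2 hpl
  push_cast at hplR
  have h4 : ((A + A + A + A).card : ℝ) ≤ K ^ 4 * A.card := by
    refine hplR.trans ?_
    have hdiv : ((A + A).card : ℝ) / A.card ≤ K := by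
      rw [div_le_iff₀ hApos]; exact hAA
    have h0 : (0 : ℝ) ≤ ((A + A).card : ℝ) / A.card := by positivity
    gcongr
  -- Ruzsa covering: 3A ⊆ X + (A - A) with #X ≤ K^4
  obtain ⟨X, hXsub, hXcard, hXcov⟩ :=
    Finset.ruzsa_covering_add (A := A + A + A) (B := A) hA h4
  have hnegA : -A = A := by
    ext x; simp only [Finset.mem_neg]
    constructor
    · rintro ⟨y, hy, rfl⟩; rwa [hneg]
    · intro hx; exact ⟨x, hx, hneg x⟩
  have hsub : A - A = A + A := by rw [sub_eq_add_neg, hnegA]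
  rw [hsub] at hXcov
  -- the subgroup generated by X: subset sums of X
  set H' : Finset G := X.powerset.image (fun s => ∑ x ∈ s, x) with hH'def
  have hH'0 : (0 : G) ∈ H' := by
    exact Finset.mem_image.2 ⟨∅, Finset.empty_mem_powerset _, by simp⟩
  have hXH' : X ⊆ H' := fun x hx =>
    Finset.mem_image.2 ⟨{x}, Finset.mem_powerset.2 (Finset.singleton_subset_iff.2 hx), by simp⟩
  have hH'add : H' + H' ⊆ H' := by
    intro z hz
    obtain ⟨a, ha, b, hb, rfl⟩ := Finset.mem_add.1 hz
    obtain ⟨s, hs, rfl⟩ := Finset.mem_image.1 ha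
    obtain ⟨t, ht, rfl⟩ := Finset.mem_image.1 hb
    rw [Finset.mem_powerset] at hs ht
    refine Finset.mem_image.2 ⟨symmDiff s t, Finset.mem_powerset.2
      ((symmDiff_le_sup (a := s) (b := t)).trans (Finset.union_subset hs ht)), ?_⟩
    have he : s ∪ t = symmDiff s t ∪ (s ∩ t) := by
      ext x; simp [Finset.mem_symmDiff]; tauto
    have hdisj : Disjoint (symmDiff s t) (s ∩ t) := by
      simpa using disjoint_symmDiff_inf s t
    have hunion : ∑ x ∈ s ∪ t, x = ∑ x ∈ symmDiff s t, x + ∑ x ∈ s ∩ t, x := by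
      rw [he, Finset.sum_union hdisj]
    have hui := Finset.sum_union_inter (s₁ := s) (s₂ := t) (f := fun x : G => x)
    rw [hunion] at hui
    rw [← hui, add_assoc, h2, add_zero]
  -- the candidate subgroup carrier
  set Bf : Finset G := H' + (A + A) with hBfdef
  have cov3 : A + A + A ⊆ H' + (A + A) :=
    hXcov.trans (Finset.add_subset_add_right hXH')
  have cov4 : A + A + (A + A) ⊆ H' + (A + A) := by
    have e1 : A + A + (A + A) = A + A + A + A := by abel_nf
    rw [e1]
    calc A + A + A + A ⊆ X + (A + A) + A := Finset.add_subset_add_right hXcov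
      _ = X + (A + A + A) := by rw [add_assoc]
      _ ⊆ X + (X + (A + A)) := Finset.add_subset_add_left hXcov
      _ = X + X + (A + A) := by rw [add_assoc]
      _ ⊆ H' + (A + A) := Finset.add_subset_add_right
          ((Finset.add_subset_add hXH' hXH').trans hH'add)
  have hBadd : Bf + Bf ⊆ Bf := by
    calc Bf + Bf = H' + H' + (A + A + (A + A)) := by rw [hBfdef]; abel_nf
      _ ⊆ H' + (H' + (A + A)) := Finset.add_subset_add hH'add cov4
      _ = H' + H' + (A + A) := by rw [add_assoc]
      _ ⊆ H' + (A + A) := Finset.add_subset_add_right hH'add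
  have hABf : A ⊆ Bf := by
    intro a ha
    have h3 : a ∈ A + A + A := by
      have : a + a + a ∈ A + A + A :=
        Finset.add_mem_add (Finset.add_mem_add ha ha) ha
      rwa [h2, zero_add] at this
    exact cov3 h3
  have h0Bf : (0 : G) ∈ Bf := by
    obtain ⟨a, ha⟩ := hA
    have : (0 : G) + (a + a) ∈ Bf :=
      Finset.add_mem_add hH'0 (Finset.add_mem_add ha ha)
    rwa [h2, add_zero] at this
  refine ⟨{ carrier := ↑Bf
            add_mem' := fun hx hy => hBadd (Finset.add_mem_add hx hy)
            zero_mem' := h0Bf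
            neg_mem' := fun {x} hx => by rwa [hneg] }, Bf.finite_toSet,
    fun a ha => hABf ha, ?_⟩
  show ((Bf : Set G).ncard : ℝ) ≤ _
  rw [Set.ncard_coe_finset]
  have hle1 : Bf.card ≤ H'.card * (A + A).card := Finset.card_add_le
  have hH'card : H'.card ≤ 2 ^ ⌈K ^ 4⌉₊ := by
    calc H'.card ≤ X.powerset.card := Finset.card_image_le
      _ = 2 ^ X.card := Finset.card_powerset X
      _ ≤ 2 ^ ⌈K ^ 4⌉₊ := by
          refine Nat.pow_le_pow_right (by norm_num) ?_
          have : (X.card : ℝ) ≤ (⌈K ^ 4⌉₊ : ℝ) := hXcard.trans (Nat.le_ceil _)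
          exact_mod_cast this
  calc (Bf.card : ℝ) ≤ (H'.card : ℝ) * (A + A).card := by exact_mod_cast hle1
    _ ≤ (2 : ℝ) ^ ⌈K ^ 4⌉₊ * (K * A.card) := by
        have hH' : (H'.card : ℝ) ≤ (2 : ℝ) ^ ⌈K ^ 4⌉₊ := by exact_mod_cast hH'card
        have h0 : (0 : ℝ) ≤ ((A + A).card : ℝ) := by positivity
        exact mul_le_mul hH' hAA h0 (by positivity)
    _ = (2 : ℝ) ^ ⌈K ^ 4⌉₊ * K * A.card := by ring
end

section
/- Let G be an additive abelian group, let A ⊆ G be a finite nonempty set, and suppose |A + A| ≤ K·|A| for some real K < 2. Then there exists a finite subgroup H of G with |H| ≥ (2 − K)·|A| such that A + A is a union of cosets of H, i.e. (A + A) + H = A + A (as sets). -/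
/-!
Kneser's theorem in the form `|A| + |B| ≤ |A + B| + |stab (A + B)|`, applied with `B = A`, gives
`|stab (A + A)| ≥ 2|A| - |A + A| ≥ (2 - K)|A|`, and `A + A` is a union of cosets of its stabilizer.

Kneser's theorem is proved following DeVos. Induct on `(|A + B|, |B|)` lexicographically: Dyson
e-transforms `(A', B')` with `|A'| + |B'| = |A| + |B|` cover `A + B` by smaller sumsets `A' + B'`,
and the bound `|A| + |B| ≤ |X| + |stab X|` survives unions by DeVos' lemma
`min (|X| + |stab X|) (|Y| + |stab Y|) ≤ |X ∪ Y| + |stab (X ∪ Y)|`, which is proved by counting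
inside a single coset of `stab X + stab Y`.
-/

open Pointwise

namespace Finset

open AddAction

section AddGroup
variable {G : Type*} [AddGroup G] {H K : AddSubgroup G}

lemma card_le_card_of_forall_sub_mem [Finite H] {s : Finset G} {a : G}
    (hs : ∀ x ∈ s, x - a ∈ H) : #s ≤ Nat.card H := by
  rw [← Nat.card_eq_finsetCard]
  exact Nat.card_le_card_of_injective (fun x ↦ ⟨x - a, hs x x.2⟩) fun x y h ↦
    Subtype.ext (sub_left_injective (congrArg Subtype.val h))

variable [DecidableEq G] {s t X Y : Finset G} {a : G}

lemma finite_stabilizer (hs : s.Nonempty) : Finite (stabilizer G s) := by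
  have := stabilizer_finite (G := G) (s := (s : Set G)) (by simpa) s.finite_toSet
  rw [stabilizer_coe_finset] at this
  exact this.to_subtype

lemma finite_of_le_stabilizer (hH : H ≤ stabilizer G s) (hs : s.Nonempty) : Finite H :=
  (finite_stabilizer hs).of_injective _ (AddSubgroup.inclusion_injective hH)

lemma card_filter_sub_mem_of_le_stabilizer [DecidablePred (· ∈ H)] (hH : H ≤ stabilizer G s)
    (ha : a ∈ s) : #{x ∈ s | x - a ∈ H} = Nat.card H := by
  rw [← Nat.card_eq_finsetCard]
  refine Nat.card_congr
    { toFun x := ⟨x - a, (mem_filter.1 x.2).2⟩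
      invFun h := ⟨h + a, mem_filter.2 ⟨mem_stabilizer_finset'.1 (hH h.2) ha, by simp⟩⟩
      left_inv x := by simp
      right_inv h := by simp }

lemma card_le_card_of_le_stabilizer (hH : H ≤ stabilizer G s) (hs : s.Nonempty) :
    Nat.card H ≤ #s := by
  classical
  obtain ⟨a, ha⟩ := hs
  exact (card_filter_sub_mem_of_le_stabilizer hH ha).symm.le.trans (card_filter_le _ _)

lemma le_stabilizer_filter_sub_mem [DecidablePred (· ∈ K)] (hH : H ≤ stabilizer G s)
    (hHK : H ≤ K) (a : G) : H ≤ stabilizer G {x ∈ s | x - a ∈ K} := fun h hh ↦ by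
  refine mem_stabilizer_finset'.2 fun x hx ↦ ?_
  rw [mem_filter] at hx ⊢
  refine ⟨mem_stabilizer_finset'.1 (hH hh) hx.1, ?_⟩
  rw [vadd_eq_add, add_sub_assoc]
  exact K.add_mem (hHK hh) hx.2

lemma min_le_card_union (hXY : ¬ X ⊆ Y) (hYX : ¬ Y ⊆ X) (hH : H ≤ stabilizer G (X \ Y))
    (hK : K ≤ stabilizer G (Y \ X)) : min (#X + Nat.card H) (#Y + Nat.card K) ≤ #(X ∪ Y) := by
  have hH' := card_le_card_of_le_stabilizer hH (sdiff_nonempty.2 hXY)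
  have hK' := card_le_card_of_le_stabilizer hK (sdiff_nonempty.2 hYX)
  have hXY' := card_sdiff_add_card X Y
  have hYX' := card_sdiff_add_card Y X
  rw [union_comm] at hYX'
  omega

/-- Double counting of the triples `(r, p, q)` with `r ∈ s ∩ t`, `p ∈ r + H ⊆ s`, `q ∈ r + K ⊆ t`:
given `(p, q)`, the possible `r` lie in a single coset of `H ⊓ K`. -/
lemma card_inter_mul_le (hH : H ≤ stabilizer G s) (hK : K ≤ stabilizer G t) :
    #(s ∩ t) * (Nat.card H * Nat.card K) ≤ #s * #t * Nat.card ↥(H ⊓ K) := by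
  classical
  obtain hst | ⟨r₀, hr₀⟩ := (s ∩ t).eq_empty_or_nonempty
  · simp [hst]
  have := finite_of_le_stabilizer hH ⟨r₀, (mem_inter.1 hr₀).1⟩
  have : Finite ↥(H ⊓ K) := Finite.of_injective _ (AddSubgroup.inclusion_injective inf_le_left)
  rw [← card_product]
  refine card_mul_le_card_mul (fun r pq ↦ pq.1 - r ∈ H ∧ pq.2 - r ∈ K) (fun r hr ↦ ?_)
    fun pq _ ↦ ?_
  · rw [mem_inter] at hr
    rw [bipartiteAbove, filter_product (· - r ∈ H) (· - r ∈ K), card_product,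
      card_filter_sub_mem_of_le_stabilizer hH hr.1, card_filter_sub_mem_of_le_stabilizer hK hr.2]
  · obtain hpq | ⟨x₀, hx₀⟩ := (bipartiteBelow (fun r pq ↦ pq.1 - r ∈ H ∧ pq.2 - r ∈ K) (s ∩ t)
      pq).eq_empty_or_nonempty
    · simp [hpq]
    refine card_le_card_of_forall_sub_mem (a := x₀) fun x hx ↦ ?_
    simp only [bipartiteBelow, mem_filter] at hx hx₀
    refine ⟨?_, ?_⟩
    · rw [← sub_add_sub_cancel x pq.1 x₀, ← neg_sub]
      exact H.add_mem (H.neg_mem hx.2.1) hx₀.2.1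
    · rw [← sub_add_sub_cancel x pq.2 x₀, ← neg_sub]
      exact K.add_mem (K.neg_mem hx.2.2) hx₀.2.2

end AddGroup

section AddCommGroup
variable {G : Type*} [AddCommGroup G] {H K : AddSubgroup G}

lemma _root_.AddSubgroup.card_sup_mul_card_inf (H K : AddSubgroup G) :
    Nat.card ↥(H ⊔ K) * Nat.card ↥(H ⊓ K) = Nat.card H * Nat.card K := by
  have hsup := AddSubgroup.relIndex_mul_relIndex ⊥ H (H ⊔ K) bot_le le_sup_left
  have hK := AddSubgroup.relIndex_mul_relIndex ⊥ (H ⊓ K) K bot_le inf_le_right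
  rw [AddSubgroup.relIndex_sup_left, AddSubgroup.relIndex_bot_left,
    AddSubgroup.relIndex_bot_left] at hsup
  rw [AddSubgroup.inf_relIndex_right, AddSubgroup.relIndex_bot_left,
    AddSubgroup.relIndex_bot_left] at hK
  rw [← hsup, ← hK]
  ring

variable [DecidableEq G] {s t P Q X Y : Finset G} {a b w z : G}

lemma card_dvd_card_of_le_stabilizer (hH : H ≤ stabilizer G s) : Nat.card H ∣ #s := by
  have hs : (s : Set G) + H = s := by
    refine subset_antisymm ?_ (Set.subset_add_left _ H.zero_mem)
    calc (s : Set G) + H ⊆ s + stabilizer G (s : Set G) :=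
          Set.add_subset_add_left (by rwa [stabilizer_coe_finset])
      _ = s := add_stabilizer_self _
  have := AddSubgroup.card_add_eq_card_addSubgroup_add_card_quotient H s
  rw [hs, Nat.card_coe_set_eq, Set.ncard_coe_finset] at this
  exact Dvd.intro _ this.symm

lemma _root_.Nat.add_mul_le_mul_add_one_or {a b u v : ℕ} (ha : 1 ≤ a) (hb : 1 ≤ b) (hav : a < v)
    (hbu : b ≤ u) : u + a * b ≤ b * v + 1 ∨ v + a * b ≤ a * u + 1 := by
  obtain ⟨x, rfl⟩ := Nat.exists_eq_add_of_lt hav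
  obtain ⟨y, rfl⟩ := Nat.exists_eq_add_of_le hbu
  by_contra! h
  nlinarith [Nat.mul_le_mul_left x hb, Nat.mul_le_mul_right y ha]

lemma card_le_card_sdiff_add_card_inf_or (hP : H ≤ stabilizer G P) (hQ : K ≤ stabilizer G Q)
    (hwP : w ∈ P) (hwQ : w ∈ Q) (hPM : ∀ x ∈ P, x - w ∈ H ⊔ K) (hQM : ∀ x ∈ Q, x - w ∈ H ⊔ K)
    (hzP : z ∉ P) (hzw : z - w ∈ H ⊔ K) :
    Nat.card H ≤ #(Q \ P) + Nat.card ↥(H ⊓ K) ∨ Nat.card K ≤ #(P \ Q) + Nat.card ↥(H ⊓ K) := by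
  have := finite_of_le_stabilizer hP ⟨w, hwP⟩
  have := finite_of_le_stabilizer hQ ⟨w, hwQ⟩
  set j := Nat.card ↥(H ⊓ K)
  obtain ⟨u, hu⟩ : j ∣ Nat.card H := AddSubgroup.card_dvd_of_le inf_le_left
  obtain ⟨v, hv⟩ : j ∣ Nat.card K := AddSubgroup.card_dvd_of_le inf_le_right
  have hju : 0 < j * u := hu ▸ Nat.card_pos
  have hjv : 0 < j * v := hv ▸ Nat.card_pos
  have hM : Nat.card ↥(H ⊔ K) = j * u * v := by
    have := AddSubgroup.card_sup_mul_card_inf H K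
    rw [hu, hv] at this
    exact Nat.eq_of_mul_eq_mul_right (Nat.pos_of_mul_pos_right hju) (by rw [this]; ring)
  have : Finite ↥(H ⊔ K) := Nat.finite_of_card_ne_zero
    (hM ▸ (Nat.mul_pos hju (Nat.pos_of_mul_pos_left hjv)).ne')
  -- In the coset `w + (H ⊔ K)`, `P` is the union of `a` of its `v` cosets of `H` (`a < v` because
  -- of `z`), and `Q` the union of `b` of its `u` cosets of `K`.
  obtain ⟨a, ha⟩ := card_dvd_card_of_le_stabilizer hP
  obtain ⟨b, hb⟩ := card_dvd_card_of_le_stabilizer hQ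
  have ha0 : 0 < a := Nat.pos_of_mul_pos_left (ha ▸ card_pos.2 ⟨w, hwP⟩)
  have hb0 : 0 < b := Nat.pos_of_mul_pos_left (hb ▸ card_pos.2 ⟨w, hwQ⟩)
  have hav : a < v := by
    have : #(insert z P) ≤ Nat.card ↥(H ⊔ K) :=
      card_le_card_of_forall_sub_mem (forall_mem_insert _ _ _ |>.2 ⟨hzw, hPM⟩)
    rw [card_insert_of_notMem hzP, ha, hu, hM] at this
    exact Nat.lt_of_mul_lt_mul_left (a := j * u) (by linarith)
  have hbu : b ≤ u := by
    have : #Q ≤ Nat.card ↥(H ⊔ K) := card_le_card_of_forall_sub_mem hQM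
    rw [hb, hv, hM] at this
    exact Nat.le_of_mul_le_mul_left (by linarith) hjv
  have hPQ_le : #(P ∩ Q) ≤ a * b * j := by
    have := card_inter_mul_le hP hQ
    rw [ha, hb, hu, hv] at this
    exact Nat.le_of_mul_le_mul_right (by convert this using 1; ring) (Nat.mul_pos hju hjv)
  have hQ_eq : #(Q \ P) + #(P ∩ Q) = #Q := by rw [inter_comm]; exact card_sdiff_add_card_inter Q P
  have hP_eq : #(P \ Q) + #(P ∩ Q) = #P := card_sdiff_add_card_inter P Q
  rcases Nat.add_mul_le_mul_add_one_or ha0 hb0 hav hbu with h | h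
  · left
    nlinarith [Nat.mul_le_mul_left j h]
  · right
    nlinarith [Nat.mul_le_mul_left j h]

lemma min_le_card_union_add_card_inf (hH : H ≤ stabilizer G X) (hK : K ≤ stabilizer G Y)
    (hKX : ¬ K ≤ stabilizer G (Y \ X)) :
    min (#X + Nat.card H) (#Y + Nat.card K) ≤ #(X ∪ Y) + Nat.card ↥(H ⊓ K) := by
  classical
  obtain ⟨g, hgK, hg⟩ := SetLike.not_le_iff_exists.1 hKX
  obtain ⟨z, hz, hgz⟩ := not_forall₂.1 (mt mem_stabilizer_finset'.2 hg)
  rw [mem_sdiff] at hz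
  have hwY : g + z ∈ Y := mem_stabilizer_finset'.1 (hK hgK) hz.1
  have hwX : g + z ∈ X := by simpa [hwY] using hgz
  -- the traces of `X` and `Y` on the coset `g + z + (H ⊔ K)`
  set P := X.filter (· - (g + z) ∈ H ⊔ K)
  set Q := Y.filter (· - (g + z) ∈ H ⊔ K)
  have hzw : z - (g + z) ∈ H ⊔ K := by
    rw [sub_add_cancel_right]
    exact AddSubgroup.mem_sup_right (K.neg_mem hgK)
  rcases card_le_card_sdiff_add_card_inf_or (le_stabilizer_filter_sub_mem hH le_sup_left _)
    (le_stabilizer_filter_sub_mem hK le_sup_right _) (mem_filter.2 ⟨hwX, by simp⟩)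
    (mem_filter.2 ⟨hwY, by simp⟩) (fun x hx ↦ (mem_filter.1 hx).2) (fun x hx ↦ (mem_filter.1 hx).2)
    (fun h ↦ hz.2 (mem_filter.1 h).1) hzw with h | h
  · refine (min_le_left _ _).trans ?_
    have : Q \ P ⊆ Y \ X := fun x hx ↦ by simp only [mem_sdiff, mem_filter, P, Q] at hx ⊢; tauto
    rw [union_comm, ← card_sdiff_add_card]
    linarith [card_le_card this]
  · refine (min_le_right _ _).trans ?_
    have : P \ Q ⊆ X \ Y := fun x hx ↦ by simp only [mem_sdiff, mem_filter, P, Q] at hx ⊢; tauto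
    rw [← card_sdiff_add_card]
    linarith [card_le_card this]

lemma min_le_card_union_add_card_stabilizer (hX : X.Nonempty) :
    min (#X + Nat.card (stabilizer G X)) (#Y + Nat.card (stabilizer G Y)) ≤
      #(X ∪ Y) + Nat.card (stabilizer G (X ∪ Y)) := by
  by_cases hXY : X ⊆ Y
  · rw [union_eq_right.2 hXY]
    exact min_le_right _ _
  by_cases hYX : Y ⊆ X
  · rw [union_eq_left.2 hYX]
    exact min_le_left _ _
  have hstab : stabilizer G X ⊓ stabilizer G Y ≤ stabilizer G (X ∪ Y) := by
    simpa only [← stabilizer_coe_finset, coe_union]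
      using stabilizer_inf_stabilizer_le_stabilizer_union
  have := finite_stabilizer (hX.mono (subset_union_left (s₂ := Y)))
  refine le_add_of_le_add_left ?_ (AddSubgroup.card_le_of_le hstab)
  by_cases hYs : stabilizer G Y ≤ stabilizer G (Y \ X)
  · by_cases hXs : stabilizer G X ≤ stabilizer G (X \ Y)
    · exact (min_le_card_union hXY hYX hXs hYs).trans le_self_add
    · simpa only [min_comm, union_comm, inf_comm]
        using min_le_card_union_add_card_inf le_rfl le_rfl hXs
  · exact min_le_card_union_add_card_inf le_rfl le_rfl hYs

lemma le_card_biUnion_add_card_stabilizer {ι : Type*} {I : Finset ι} {f : ι → Finset G} {m : ℕ}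
    (hI : I.Nonempty) (hf : ∀ i ∈ I, (f i).Nonempty)
    (hm : ∀ i ∈ I, m ≤ #(f i) + Nat.card (stabilizer G (f i))) :
    m ≤ #(I.biUnion f) + Nat.card (stabilizer G (I.biUnion f)) := by
  classical
  induction hI using Finset.Nonempty.cons_induction with
  | singleton i => simpa using hm i (mem_singleton_self i)
  | cons i I hi hI ih =>
    rw [cons_eq_insert, biUnion_insert]
    simp only [mem_cons, forall_eq_or_imp] at hf hm
    exact (le_min hm.1 (ih hf.2 hm.2)).trans (min_le_card_union_add_card_stabilizer hf.1)

lemma mem_addDysonETransform_snd_sub (ha : a ∈ s) (hb : b ∈ t) :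
    b ∈ (addDysonETransform (a - b) (s, t)).2 := by
  refine mem_inter.2 ⟨hb, mem_neg_vadd_finset_iff.2 ?_⟩
  rwa [vadd_eq_add, sub_add_cancel]

lemma addDysonETransform_snd_ssubset (h : ¬ a +ᵥ t ⊆ s) : (addDysonETransform a (s, t)).2 ⊂ t := by
  obtain ⟨x, hxt, hxs⟩ := not_subset.1 h
  obtain ⟨c, hc, rfl⟩ := mem_vadd_finset.1 hxt
  refine inter_subset_left.ssubset_of_not_subset fun hct ↦ hxs ?_
  exact mem_neg_vadd_finset_iff.1 (mem_inter.1 (hct hc)).2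

lemma biUnion_addDysonETransform_eq (hb : b ∈ t) (hI : {a ∈ s | ¬ (a - b) +ᵥ t ⊆ s}.Nonempty) :
    {a ∈ s | ¬ (a - b) +ᵥ t ⊆ s}.biUnion
      (fun a ↦ (addDysonETransform (a - b) (s, t)).1 + (addDysonETransform (a - b) (s, t)).2) =
      s + t := by
  refine subset_antisymm (biUnion_subset.2 fun a _ ↦ addDysonETransform.subset _ _) fun x hx ↦ ?_
  obtain ⟨a, ha, c, hc, rfl⟩ := mem_add.1 hx
  obtain ⟨a', ha', hc'⟩ : ∃ a' ∈ {a ∈ s | ¬ (a - b) +ᵥ t ⊆ s},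
      a - b + c ∈ (addDysonETransform (a' - b) (s, t)).1 := by
    by_cases hat : (a - b) +ᵥ t ⊆ s
    · obtain ⟨a₀, ha₀⟩ := hI
      exact ⟨a₀, ha₀, mem_union_left _ (hat (vadd_mem_vadd_finset hc))⟩
    · exact ⟨a, mem_filter.2 ⟨ha, hat⟩, mem_union_right _ (vadd_mem_vadd_finset hc)⟩
  exact mem_biUnion.2 ⟨a', ha', mem_add.2 ⟨a - b + c, hc', b,
    mem_addDysonETransform_snd_sub (mem_filter.1 ha').1 hb, by abel⟩⟩

theorem card_add_card_le_card_add_add_card_stabilizer {s t : Finset G} (hs : s.Nonempty)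
    (ht : t.Nonempty) :
    #s + #t ≤ #(s + t) + Nat.card (stabilizer G (s + t)) := by
  obtain ⟨b, hb⟩ := ht
  obtain hI | hI := {a ∈ s | ¬ (a - b) +ᵥ t ⊆ s}.eq_empty_or_nonempty
  · have hst : ∀ a ∈ s, (a - b) +ᵥ t ⊆ s := by simpa [filter_eq_empty_iff] using hI
    have hstab : ∀ c ∈ t, c - b ∈ stabilizer G (s + t) := fun c hc ↦ by
      refine mem_stabilizer_finset'.2 fun x hx ↦ ?_
      obtain ⟨a, ha, c', hc', rfl⟩ := mem_add.1 hx
      exact mem_add.2 ⟨a - b + c, hst a ha (vadd_mem_vadd_finset hc), c', hc', by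
        rw [vadd_eq_add]; abel⟩
    have := finite_stabilizer (hs.add ⟨b, hb⟩)
    exact add_le_add (card_le_card_add_right ⟨b, hb⟩) (card_le_card_of_forall_sub_mem hstab)
  rw [← biUnion_addDysonETransform_eq hb hI]
  refine le_card_biUnion_add_card_stabilizer hI (fun a ha ↦ ?_) fun a ha ↦ ?_
  · exact (hs.mono subset_union_left).add ⟨b, mem_addDysonETransform_snd_sub (mem_filter.1 ha).1 hb⟩
  · rw [mem_filter] at ha
    rw [← addDysonETransform.card (a - b) (s, t)]
    exact card_add_card_le_card_add_add_card_stabilizer (s := (addDysonETransform (a - b) (s, t)).1)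
      (hs.mono subset_union_left) ⟨b, mem_addDysonETransform_snd_sub ha.1 hb⟩
termination_by (#(s + t), #t)
decreasing_by
  have hsub := card_le_card (addDysonETransform.subset (a - b) (s, t))
  have hlt := card_lt_card (addDysonETransform_snd_ssubset (mem_filter.1 ha).2)
  exact Prod.lex_def.2 (hsub.lt_or_eq.imp id fun h ↦ ⟨h, hlt⟩)

end AddCommGroup

end Finset

theorem kneser_consequence_general (G : Type*) [AddCommGroup G] [DecidableEq G]
    (A : Finset G) (hA : A.Nonempty) (K : ℝ)
    (h : ((A + A).card : ℝ) ≤ K * A.card) :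
    ∃ H : AddSubgroup G, (H : Set G).Finite ∧
      (2 - K) * A.card ≤ ((H : Set G).ncard : ℝ) ∧
      (↑(A + A) : Set G) + (H : Set G) = (↑(A + A) : Set G) := by
  have hkneser : (A.card + A.card : ℝ) ≤
      (A + A).card + Nat.card (AddAction.stabilizer G (A + A)) := by
    exact_mod_cast Finset.card_add_card_le_card_add_add_card_stabilizer hA hA
  refine ⟨AddAction.stabilizer G ((A + A : Finset G) : Set G),
    AddAction.stabilizer_finite (by simpa using hA.add hA) (Finset.finite_toSet _), ?_,
    AddAction.add_stabilizer_self _⟩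
  rw [← Nat.card_coe_set_eq, SetLike.coe_sort_coe, AddAction.stabilizer_coe_finset]
  linarith

/-- A consequence of Kneser's theorem: if `|A + A| ≤ K|A|` with `K < 2` then `A + A` is a
union of cosets of a finite subgroup `H` of size at least `(2 - K)|A|`. -/
theorem kneser_consequence (G : Type*) [AddCommGroup G] [DecidableEq G]
    (A : Finset G) (hA : A.Nonempty) (K : ℝ) (hK : K < 2)
    (h : ((A + A).card : ℝ) ≤ K * A.card) :
    ∃ H : AddSubgroup G, (H : Set G).Finite ∧
      (2 - K) * A.card ≤ ((H : Set G).ncard : ℝ) ∧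
      (↑(A + A) : Set G) + (H : Set G) = (↑(A + A) : Set G) :=
  kneser_consequence_general G A hA K h
end

section
/- Let G be a group (written multiplicatively) and let A ⊆ G be a finite nonempty set with |A·A| = |A|, where A·A = {a₁a₂ : a₁, a₂ ∈ A}. Then there exist a finite subgroup H of G and an element x ∈ G normalising H (i.e. x·H = H·x as sets) such that A = H·x (as sets). -/
open Pointwise

/-- A finite nonempty subset of a group with `|A·A| = |A|` is a coset `H·x` of a finite
subgroup `H`, where `x` normalises `H`. -/
theorem doubling_one_nonabelian (G : Type*) [Group G] [DecidableEq G]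
    (A : Finset G) (hA : A.Nonempty) (h : (A * A).card = A.card) :
    ∃ (H : Subgroup G) (x : G), (H : Set G).Finite ∧
      {x} * (H : Set G) = (H : Set G) * {x} ∧
      (↑A : Set G) = (H : Set G) * {x} := by
  obtain ⟨a, ha⟩ := hA
  have hleft : ∀ b ∈ A, {b} * A = A * A := by
    intro b hb
    refine Finset.eq_of_subset_of_card_le (Finset.mul_subset_mul (by simp [hb]) le_rfl) ?_
    rw [h, Finset.card_singleton_mul]
  have hright : ∀ b ∈ A, A * {b} = A * A := by
    intro b hb
    refine Finset.eq_of_subset_of_card_le (Finset.mul_subset_mul le_rfl (by simp [hb])) ?_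
    rw [h, Finset.card_mul_singleton]
  have comm : {a} * A = A * {a} := by rw [hleft a ha, hright a ha]
  have comm' : A * ({a⁻¹} : Finset G) = {a⁻¹} * A := by
    have h2 := congrArg (fun S => ({a⁻¹} : Finset G) * S * {a⁻¹}) comm
    simp only [← mul_assoc, Finset.singleton_mul_singleton, inv_mul_cancel,
      Finset.singleton_one, one_mul] at h2
    rw [mul_assoc ({a⁻¹} * A), Finset.singleton_mul_singleton, mul_inv_cancel,
      Finset.singleton_one, mul_one] at h2
    exact h2
  set K : Finset G := {a⁻¹} * A with hK
  have h1 : (1 : G) ∈ K := by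
    rw [hK, Finset.mem_mul]
    exact ⟨a⁻¹, Finset.mem_singleton_self _, a, ha, inv_mul_cancel a⟩
  have hKK : K * K = K := by
    calc K * K = {a⁻¹} * (A * {a⁻¹}) * A := by
            rw [hK, mul_assoc, mul_assoc, mul_assoc]
      _ = {a⁻¹} * ({a⁻¹} * (A * A)) := by rw [comm', mul_assoc, mul_assoc]
      _ = {a⁻¹} * ({a⁻¹} * ({a} * A)) := by rw [hleft a ha]
      _ = K := by rw [← mul_assoc ({a⁻¹} : Finset G) {a},
            Finset.singleton_mul_singleton, inv_mul_cancel, Finset.singleton_one, one_mul, hK]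
  have hmulmem : ∀ x ∈ K, ∀ y ∈ K, x * y ∈ K := by
    intro x hx y hy
    rw [← hKK]; exact Finset.mul_mem_mul hx hy
  have hinv : ∀ x ∈ K, x⁻¹ ∈ K := by
    intro x hx
    have hsub : ({x} : Finset G) * K = K := by
      refine Finset.eq_of_subset_of_card_le ?_ ?_
      · intro z hz
        rw [Finset.mem_mul] at hz
        obtain ⟨u, hu, y, hy, rfl⟩ := hz
        obtain rfl : u = x := Finset.mem_singleton.1 hu
        exact hmulmem u hx y hy
      · exact (Finset.card_singleton_mul x K).ge
    rw [← hsub, Finset.mem_mul] at h1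
    obtain ⟨u, hu, y, hy, hy1⟩ := h1
    have hux : u = x := Finset.mem_singleton.1 hu
    have : x⁻¹ = y := by
      rw [hux] at hy1
      exact inv_eq_of_mul_eq_one_right hy1
    rwa [this]
  have hKa : K * ({a} : Finset G) = A := by
    rw [hK, mul_assoc, ← comm, ← mul_assoc, Finset.singleton_mul_singleton,
      inv_mul_cancel, Finset.singleton_one, one_mul]
  have haK : ({a} : Finset G) * K = A := by
    rw [hK, ← mul_assoc, Finset.singleton_mul_singleton, mul_inv_cancel,
      Finset.singleton_one, one_mul]
  refine ⟨{ carrier := ↑K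
            mul_mem' := fun hx hy => hmulmem _ hx _ hy
            one_mem' := h1
            inv_mem' := fun hx => hinv _ hx }, a, K.finite_toSet, ?_, ?_⟩
  · show ({a} : Set G) * ↑K = ↑K * {a}
    rw [← Finset.coe_singleton a, ← Finset.coe_mul, ← Finset.coe_mul, haK, hKa]
  · show (↑A : Set G) = ↑K * {a}
    rw [← Finset.coe_singleton a, ← Finset.coe_mul, hKa]
end

section
/- Let G be a group and let A ⊆ G be a finite nonempty set with |A·A| < (3/2)·|A|. Then the set H := A·A⁻¹ = {a₁a₂⁻¹ : a₁, a₂ ∈ A} is (the underlying set of) a finite subgroup of G of order |H| = |A·A|, and there exists x ∈ G with x·H = H·x (as sets) such that A ⊆ x·H. (Freiman's very small doubling theorem.) -/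
open Pointwise Finset

section FvsdHelpers

variable {G : Type*} [Group G] [DecidableEq G]

private lemma fvsd_inter_nonempty {S T U : Finset G} (hS : S ⊆ U) (hT : T ⊆ U)
    (h : U.card < S.card + T.card) : (S ∩ T).Nonempty := by
  rw [← Finset.card_pos]
  have h1 := Finset.card_inter_add_card_union S T
  have hu : (S ∪ T).card ≤ U.card := Finset.card_le_card (Finset.union_subset hS hT)
  omega

private lemma fvsd_mem_mulInv {A : Finset G} {g : G} :
    g ∈ A * A⁻¹ ↔ ∃ x ∈ A, g * x ∈ A := by
  simp only [Finset.mem_mul, Finset.mem_inv]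
  constructor
  · rintro ⟨y, hy, z, ⟨x, hx, rfl⟩, rfl⟩
    exact ⟨x, hx, by simpa using hy⟩
  · rintro ⟨x, hx, hgx⟩
    exact ⟨g * x, hgx, x⁻¹, ⟨x, hx, rfl⟩, by group⟩

private lemma fvsd_mem_invMul {A : Finset G} {g : G} :
    g ∈ A⁻¹ * A ↔ ∃ x ∈ A, x * g ∈ A := by
  simp only [Finset.mem_mul, Finset.mem_inv]
  constructor
  · rintro ⟨z, ⟨x, hx, rfl⟩, y, hy, rfl⟩
    exact ⟨x, hx, by simpa using hy⟩
  · rintro ⟨x, hx, hxg⟩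
    exact ⟨x⁻¹, ⟨x, hx, rfl⟩, x * g, hxg, by group⟩

variable {A : Finset G} (h2 : 2 * (A * A).card < 3 * A.card)

include h2

private lemma fvsd_cardP {u v : G} (hu : u ∈ A) (hv : v ∈ A) :
    A.card < 2 * (A.filter fun x => (u⁻¹ * v) * x ∈ A).card := by
  have e : (A.filter fun x => (u⁻¹ * v) * x ∈ A) = v⁻¹ • ((u • A) ∩ (v • A)) := by
    ext x
    rw [Finset.mem_inv_smul_finset_iff, Finset.mem_inter, ← Finset.inv_smul_mem_iff (a := u),
      Finset.smul_mem_smul_finset_iff, Finset.mem_filter]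
    simp [smul_eq_mul, mul_assoc, and_comm]
  rw [e, Finset.card_smul_finset]
  have hsu : u • A ⊆ A * A := by
    intro x hx
    rw [Finset.mem_smul_finset] at hx
    obtain ⟨y, hy, rfl⟩ := hx
    exact Finset.mul_mem_mul hu hy
  have hsv : v • A ⊆ A * A := by
    intro x hx
    rw [Finset.mem_smul_finset] at hx
    obtain ⟨y, hy, rfl⟩ := hx
    exact Finset.mul_mem_mul hv hy
  have h3 := Finset.card_inter_add_card_union (u • A) (v • A)
  have h4 : ((u • A) ∪ (v • A)).card ≤ (A * A).card :=
    Finset.card_le_card (Finset.union_subset hsu hsv)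
  rw [Finset.card_smul_finset, Finset.card_smul_finset] at h3
  omega

private lemma fvsd_cardQ {u v : G} (hu : u ∈ A) (hv : v ∈ A) :
    A.card < 2 * (A.filter fun x => x * (u * v⁻¹) ∈ A).card := by
  have e : (A.filter fun x => x * (u * v⁻¹) ∈ A)
      = ((A.image (· * u)) ∩ (A.image (· * v))).image (· * u⁻¹) := by
    ext x
    simp only [Finset.mem_filter, Finset.mem_image, Finset.mem_inter]
    constructor
    · rintro ⟨hx, hx2⟩
      exact ⟨x * u, ⟨⟨x, hx, rfl⟩, ⟨x * (u * v⁻¹), hx2, by group⟩⟩, by group⟩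
    · rintro ⟨z, ⟨⟨p, hp, rfl⟩, ⟨q, hq, hq2⟩⟩, rfl⟩
      refine ⟨by simpa using hp, ?_⟩
      have : p * u * u⁻¹ * (u * v⁻¹) = q := by rw [← hq2]; group
      rw [this]
      exact hq
  rw [e, Finset.card_image_of_injective _ (mul_left_injective u⁻¹)]
  have hsu : A.image (· * u) ⊆ A * A := by
    intro x hx
    obtain ⟨y, hy, rfl⟩ := Finset.mem_image.1 hx
    exact Finset.mul_mem_mul hy hu
  have hsv : A.image (· * v) ⊆ A * A := by
    intro x hx
    obtain ⟨y, hy, rfl⟩ := Finset.mem_image.1 hx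
    exact Finset.mul_mem_mul hy hv
  have h3 := Finset.card_inter_add_card_union (A.image (· * u)) (A.image (· * v))
  have h4 : ((A.image (· * u)) ∪ (A.image (· * v))).card ≤ (A * A).card :=
    Finset.card_le_card (Finset.union_subset hsu hsv)
  rw [Finset.card_image_of_injective _ (mul_left_injective u),
    Finset.card_image_of_injective _ (mul_left_injective v)] at h3
  omega

private lemma fvsd_invMul_eq : A⁻¹ * A = A * A⁻¹ := by
  ext g
  constructor
  · intro hg
    obtain ⟨z, hz, v, hv, rfl⟩ := Finset.mem_mul.1 hg
    obtain ⟨u, hu, rfl⟩ := Finset.mem_inv.1 hz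
    have hc := fvsd_cardP h2 hu hv
    obtain ⟨x, hx⟩ := Finset.card_pos.1 (by omega : 0 < (A.filter fun x => (u⁻¹ * v) * x ∈ A).card)
    rw [Finset.mem_filter] at hx
    exact fvsd_mem_mulInv.2 ⟨x, hx.1, hx.2⟩
  · intro hg
    obtain ⟨u, hu, z, hz, rfl⟩ := Finset.mem_mul.1 hg
    obtain ⟨v, hv, rfl⟩ := Finset.mem_inv.1 hz
    have hc := fvsd_cardQ h2 hu hv
    obtain ⟨x, hx⟩ := Finset.card_pos.1 (by omega : 0 < (A.filter fun x => x * (u * v⁻¹) ∈ A).card)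
    rw [Finset.mem_filter] at hx
    exact fvsd_mem_invMul.2 ⟨x, hx.1, hx.2⟩

private lemma fvsd_keyP {g : G} (hg : g ∈ A * A⁻¹) :
    A.card < 2 * (A.filter fun x => g * x ∈ A).card := by
  rw [← fvsd_invMul_eq h2] at hg
  obtain ⟨z, hz, v, hv, rfl⟩ := Finset.mem_mul.1 hg
  obtain ⟨u, hu, rfl⟩ := Finset.mem_inv.1 hz
  exact fvsd_cardP h2 hu hv

private lemma fvsd_keyQ {g : G} (hg : g ∈ A * A⁻¹) :
    A.card < 2 * (A.filter fun x => x * g ∈ A).card := by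
  obtain ⟨u, hu, z, hz, rfl⟩ := Finset.mem_mul.1 hg
  obtain ⟨v, hv, rfl⟩ := Finset.mem_inv.1 hz
  exact fvsd_cardQ h2 hu hv

private lemma fvsd_mul_mem {g h : G} (hg : g ∈ A * A⁻¹) (hh : h ∈ A * A⁻¹) :
    g * h ∈ A * A⁻¹ := by
  set S := (A.filter fun x => h * x ∈ A).image (h * ·) with hS
  have hSA : S ⊆ A := by
    intro z hz
    obtain ⟨x, hx, rfl⟩ := Finset.mem_image.1 hz
    exact (Finset.mem_filter.1 hx).2
  have hScard : S.card = (A.filter fun x => h * x ∈ A).card :=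
    Finset.card_image_of_injective _ (mul_right_injective h)
  have hTA : (A.filter fun x => g * x ∈ A) ⊆ A := Finset.filter_subset _ _
  have h1 := fvsd_keyP h2 hh
  have h3 := fvsd_keyP h2 hg
  obtain ⟨z, hz⟩ := fvsd_inter_nonempty hSA hTA (by omega)
  rw [Finset.mem_inter] at hz
  obtain ⟨x, hx, rfl⟩ := Finset.mem_image.1 hz.1
  have hx' := Finset.mem_filter.1 hx
  have hz2 := (Finset.mem_filter.1 hz.2).2
  exact fvsd_mem_mulInv.2 ⟨x, hx'.1, by rwa [mul_assoc]⟩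

private lemma fvsd_inv_mem {g : G} (hg : g ∈ A * A⁻¹) : g⁻¹ ∈ A * A⁻¹ := by
  obtain ⟨x, hx, hgx⟩ := fvsd_mem_mulInv.1 hg
  exact fvsd_mem_mulInv.2 ⟨g * x, hgx, by simpa using hx⟩

private lemma fvsd_card_lt (hA : A.Nonempty) : (A * A⁻¹).card < 2 * A.card := by
  obtain ⟨a, ha⟩ := hA
  have hone : (1 : G) ∈ A * A⁻¹ := fvsd_mem_mulInv.2 ⟨a, ha, by simpa using ha⟩
  have hsum : ∑ h ∈ A * A⁻¹, (A.filter fun x => x * h ∈ A).card = A.card * A.card := by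
    rw [← Finset.card_sigma, ← Finset.card_product]
    apply Finset.card_bij (fun p _ => (p.2, p.2 * p.1))
    · rintro ⟨h, x⟩ hp
      rw [Finset.mem_sigma] at hp
      have hx := Finset.mem_filter.1 hp.2
      exact Finset.mem_product.2 ⟨hx.1, hx.2⟩
    · rintro ⟨h, x⟩ hp ⟨h', x'⟩ hp' he
      simp only [Prod.mk.injEq] at he
      obtain ⟨rfl, he2⟩ := he
      have : h = h' := mul_left_cancel he2
      subst this
      rfl
    · rintro ⟨x, y⟩ hxy
      rw [Finset.mem_product] at hxy
      refine ⟨⟨x⁻¹ * y, x⟩, ?_, by simp⟩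
      rw [Finset.mem_sigma]
      constructor
      · rw [← fvsd_invMul_eq h2]
        exact Finset.mem_mul.2 ⟨x⁻¹, Finset.mem_inv.2 ⟨x, hxy.1, rfl⟩, y, hxy.2, rfl⟩
      · rw [Finset.mem_filter]
        exact ⟨hxy.1, by simpa using hxy.2⟩
  have hterm : ∀ h ∈ A * A⁻¹, A.card < 2 * (A.filter fun x => x * h ∈ A).card :=
    fun h hh => fvsd_keyQ h2 hh
  have hlt : (A * A⁻¹).card * A.card < 2 * (A.card * A.card) := by
    calc (A * A⁻¹).card * A.card = ∑ _h ∈ A * A⁻¹, A.card := by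
          rw [Finset.sum_const, smul_eq_mul]
      _ < ∑ h ∈ A * A⁻¹, 2 * (A.filter fun x => x * h ∈ A).card :=
          Finset.sum_lt_sum_of_nonempty ⟨1, hone⟩ hterm
      _ = 2 * (A.card * A.card) := by rw [← Finset.mul_sum, hsum]
  have hApos : 0 < A.card := Finset.card_pos.2 ⟨a, ha⟩
  nlinarith

private lemma fvsd_conj_mem {a g : G} (hA : A.Nonempty) (ha : a ∈ A) (hg : g ∈ A * A⁻¹) :
    a * g * a⁻¹ ∈ A * A⁻¹ := by
  have hScard : (A.image (a⁻¹ * ·)).card = A.card :=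
    Finset.card_image_of_injective _ (mul_right_injective a⁻¹)
  have hSsub : A.image (a⁻¹ * ·) ⊆ A * A⁻¹ := by
    intro z hz
    obtain ⟨x, hx, rfl⟩ := Finset.mem_image.1 hz
    rw [← fvsd_invMul_eq h2]
    exact fvsd_mem_invMul.2 ⟨a, ha, by simpa using hx⟩
  have hTcard : (A.image fun x => g * (a⁻¹ * x)).card = A.card := by
    apply Finset.card_image_of_injective
    exact (mul_right_injective g).comp (mul_right_injective a⁻¹)
  have hTsub : (A.image fun x => g * (a⁻¹ * x)) ⊆ A * A⁻¹ := by
    intro z hz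
    obtain ⟨x, hx, rfl⟩ := Finset.mem_image.1 hz
    exact fvsd_mul_mem h2 hg (hSsub (Finset.mem_image_of_mem _ hx))
  have hH := fvsd_card_lt h2 hA
  obtain ⟨z, hz⟩ := fvsd_inter_nonempty hSsub hTsub (by omega)
  rw [Finset.mem_inter] at hz
  obtain ⟨y, hy, hy2⟩ := Finset.mem_image.1 hz.1
  obtain ⟨x, hx, hx2⟩ := Finset.mem_image.1 hz.2
  refine fvsd_mem_mulInv.2 ⟨x, hx, ?_⟩
  have : a * g * a⁻¹ * x = a * (g * (a⁻¹ * x)) := by group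
  rw [this, hx2, ← hy2]
  simpa using hy

private lemma fvsd_conj_mem' {a g : G} (hA : A.Nonempty) (ha : a ∈ A) (hg : g ∈ A * A⁻¹) :
    a⁻¹ * g * a ∈ A * A⁻¹ := by
  have hSsub : A.image (· * a⁻¹) ⊆ A * A⁻¹ := by
    intro z hz
    obtain ⟨x, hx, rfl⟩ := Finset.mem_image.1 hz
    exact fvsd_mem_mulInv.2 ⟨a, ha, by simpa using hx⟩
  have hScard : (A.image (· * a⁻¹)).card = A.card :=
    Finset.card_image_of_injective _ (mul_left_injective a⁻¹)
  have hTsub : (A.image fun x => x * a⁻¹ * g) ⊆ A * A⁻¹ := by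
    intro z hz
    obtain ⟨x, hx, rfl⟩ := Finset.mem_image.1 hz
    exact fvsd_mul_mem h2 (hSsub (Finset.mem_image_of_mem _ hx)) hg
  have hTcard : (A.image fun x => x * a⁻¹ * g).card = A.card := by
    apply Finset.card_image_of_injective
    exact (mul_left_injective g).comp (mul_left_injective a⁻¹)
  have hH := fvsd_card_lt h2 hA
  obtain ⟨z, hz⟩ := fvsd_inter_nonempty hSsub hTsub (by omega)
  rw [Finset.mem_inter] at hz
  obtain ⟨y, hy, hy2⟩ := Finset.mem_image.1 hz.1
  obtain ⟨x, hx, hx2⟩ := Finset.mem_image.1 hz.2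
  rw [← fvsd_invMul_eq h2]
  refine fvsd_mem_invMul.2 ⟨x, hx, ?_⟩
  have : x * (a⁻¹ * g * a) = (x * a⁻¹ * g) * a := by group
  rw [this, hx2, ← hy2]
  simpa using hy

private lemma fvsd_AA_eq {a : G} (hA : A.Nonempty) (ha : a ∈ A) :
    A * A = {a} * (A * A⁻¹) * {a} := by
  have hmem : ∀ z : G, z ∈ ({a} * (A * A⁻¹) * {a} : Finset G) ↔
      ∃ h ∈ A * A⁻¹, a * h * a = z := by
    intro z
    constructor
    · intro hz
      obtain ⟨w, hw, s, hs, rfl⟩ := Finset.mem_mul.1 hz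
      obtain ⟨w1, hw1, hh, hhm, rfl⟩ := Finset.mem_mul.1 hw
      rw [Finset.mem_singleton] at hs hw1
      subst hs; subst hw1
      exact ⟨hh, hhm, rfl⟩
    · rintro ⟨hh, hhm, rfl⟩
      exact Finset.mul_mem_mul
        (Finset.mul_mem_mul (Finset.mem_singleton_self a) hhm) (Finset.mem_singleton_self a)
  ext z
  rw [hmem]
  constructor
  · intro hz
    obtain ⟨b, hb, c, hc, rfl⟩ := Finset.mem_mul.1 hz
    have h1 : a⁻¹ * b ∈ A * A⁻¹ := by
      rw [← fvsd_invMul_eq h2]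
      exact fvsd_mem_invMul.2 ⟨a, ha, by simpa using hb⟩
    have h3 : c * a⁻¹ ∈ A * A⁻¹ := fvsd_mem_mulInv.2 ⟨a, ha, by simpa using hc⟩
    exact ⟨(a⁻¹ * b) * (c * a⁻¹), fvsd_mul_mem h2 h1 h3, by group⟩
  · rintro ⟨h, hh, rfl⟩
    -- show a * h * a ∈ A * A
    have hSsub : A ⊆ {a} * (A * A⁻¹) := by
      intro x hx
      refine Finset.mem_mul.2 ⟨a, Finset.mem_singleton_self a, a⁻¹ * x, ?_, by group⟩
      rw [← fvsd_invMul_eq h2]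
      exact fvsd_mem_invMul.2 ⟨a, ha, by simpa using hx⟩
    have hTsub : (A.image fun q => a * h * (a * q⁻¹)) ⊆ {a} * (A * A⁻¹) := by
      intro z hz
      obtain ⟨q, hq, rfl⟩ := Finset.mem_image.1 hz
      refine Finset.mem_mul.2 ⟨a, Finset.mem_singleton_self a, h * (a * q⁻¹), ?_, by group⟩
      refine fvsd_mul_mem h2 hh (fvsd_mem_mulInv.2 ⟨q, hq, by simpa using ha⟩)
    have hTcard : (A.image fun q => a * h * (a * q⁻¹)).card = A.card := by
      apply Finset.card_image_of_injective
      intro q q' e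
      have e1 : a * q⁻¹ = a * q'⁻¹ := mul_left_cancel e
      have e2 : q⁻¹ = q'⁻¹ := mul_left_cancel e1
      exact inv_injective e2
    have hUcard : ({a} * (A * A⁻¹) : Finset G).card = (A * A⁻¹).card :=
      Finset.card_singleton_mul a _
    have hH := fvsd_card_lt h2 hA
    obtain ⟨p, hp⟩ := fvsd_inter_nonempty hSsub hTsub (by omega)
    rw [Finset.mem_inter] at hp
    obtain ⟨q, hq, hq2⟩ := Finset.mem_image.1 hp.2
    have : a * h * a = p * q := by rw [← hq2]; group
    rw [this]
    exact Finset.mul_mem_mul hp.1 hq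

end FvsdHelpers

/-- Freiman's very small doubling theorem: if `|A·A| < (3/2)|A|` then `A·A⁻¹` is a finite
subgroup `H` of order `|A·A|`, normalised by some `x` with `A ⊆ x·H`. -/
theorem freiman_very_small_doubling (G : Type*) [Group G] [DecidableEq G]
    (A : Finset G) (hA : A.Nonempty)
    (h : ((A * A).card : ℝ) < (3 / 2) * A.card) :
    ∃ H : Subgroup G, (H : Set G) = (↑(A * A⁻¹) : Set G) ∧
      (A * A⁻¹).card = (A * A).card ∧
      ∃ x : G, {x} * (H : Set G) = (H : Set G) * {x} ∧
        (↑A : Set G) ⊆ {x} * (H : Set G) := by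
  have h2 : 2 * (A * A).card < 3 * A.card := by
    have : (2 : ℝ) * (A * A).card < 3 * A.card := by linarith
    exact_mod_cast this
  obtain ⟨a, ha⟩ := hA
  have hA' : A.Nonempty := ⟨a, ha⟩
  have hone : (1 : G) ∈ A * A⁻¹ := fvsd_mem_mulInv.2 ⟨a, ha, by simpa using ha⟩
  have hcard : (A * A⁻¹).card = (A * A).card := by
    rw [fvsd_AA_eq h2 hA' ha, Finset.card_mul_singleton, Finset.card_singleton_mul]
  refine ⟨{ carrier := (↑(A * A⁻¹ : Finset G) : Set G),
            mul_mem' := fun hx hy => by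
              simp only [Finset.mem_coe] at *
              exact fvsd_mul_mem h2 hx hy,
            one_mem' := Finset.mem_coe.2 hone,
            inv_mem' := fun hx => by
              simp only [Finset.mem_coe] at *
              exact fvsd_inv_mem h2 hx }, rfl, hcard, a, ?_, ?_⟩
  · ext z
    simp only [Set.singleton_mul, Set.mul_singleton, Set.mem_image]
    constructor
    · rintro ⟨y, hy, rfl⟩
      simp only [SetLike.mem_coe] at hy ⊢
      refine ⟨a * y * a⁻¹, ?_, by group⟩
      show a * y * a⁻¹ ∈ (↑(A * A⁻¹ : Finset G) : Set G)
      rw [Finset.mem_coe]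
      exact fvsd_conj_mem h2 hA' ha (by exact_mod_cast hy)
    · rintro ⟨y, hy, rfl⟩
      refine ⟨a⁻¹ * y * a, ?_, by group⟩
      show a⁻¹ * y * a ∈ (↑(A * A⁻¹ : Finset G) : Set G)
      rw [Finset.mem_coe]
      exact fvsd_conj_mem' h2 hA' ha (by exact_mod_cast hy)
  · intro x hx
    rw [Set.singleton_mul]
    refine ⟨a⁻¹ * x, ?_, by group⟩
    show a⁻¹ * x ∈ (↑(A * A⁻¹ : Finset G) : Set G)
    rw [Finset.mem_coe, ← fvsd_invMul_eq h2]
    exact fvsd_mem_invMul.2 ⟨a, ha, by simpa using hx⟩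
end

section
/- Let ε > 0 be real, let G be a group, and let A ⊆ G be a finite nonempty set with |A·A| ≤ (2 − ε)·|A|. Then there exist a finite subgroup H of G with |H| ≤ (2/ε)·|A| and a finite set X ⊆ G with |X| ≤ 2/ε − 1 such that A ⊆ ⋃_{x ∈ X} H·x, i.e. A is covered by at most 2/ε − 1 right-cosets of H. (Hamidoune's theorem.) -/
open Pointwise

/-- Hamidoune's theorem: if `|A·A| ≤ (2 - ε)|A|` then `A` is covered by at most `2/ε - 1`
right-cosets of a finite subgroup `H` of order at most `(2/ε)|A|`. -/
theorem hamidoune_theorem (ε : ℝ) (hε : 0 < ε) (G : Type*) [Group G] [DecidableEq G]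
    (A : Finset G) (hA : A.Nonempty)
    (h : ((A * A).card : ℝ) ≤ (2 - ε) * A.card) :
    ∃ H : Subgroup G, (H : Set G).Finite ∧
      ((H : Set G).ncard : ℝ) ≤ (2 / ε) * A.card ∧
      ∃ X : Finset G, (X.card : ℝ) ≤ 2 / ε - 1 ∧
        (↑A : Set G) ⊆ ⋃ x ∈ X, (H : Set G) * {x} := by
  have hε₁ : ε ≤ 1 := by
    have : (A.card : ℝ) ≤ (A * A).card := mod_cast Finset.card_le_card_mul_self
    nlinarith [show (0 : ℝ) < A.card from mod_cast hA.card_pos]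
  obtain ⟨H, _, X, hH, hX, hcover⟩ := Finset.doubling_lt_two hε hε₁ hA h
  refine ⟨H, Set.toFinite _, ?_, X, hX, ?_⟩
  · rw [← Nat.card_coe_set_eq, SetLike.coe_sort_coe, Nat.card_eq_fintype_card]
    exact hH.trans (by gcongr; linarith)
  · rw [← Set.iUnion_mul_right_image] at hcover
    simpa only [Finset.mem_coe, Set.mul_singleton] using hcover
end

section
/- There exists an absolute constant C ≥ 1 such that the following holds. Let G be a group, let K ≥ 2 be a real number, and let A ⊆ G be a finite nonempty set with |A·A| ≤ K·|A|. Then there exists a finite set H ⊆ G which is a K^C-approximate group (i.e. 1 ∈ H, H⁻¹ = H, and there is a finite set Z ⊆ G with |Z| ≤ K^C and H·H ⊆ Z·H), with |H| ≤ C·K^C·|A|, together with finite sets X, Y ⊆ G with |X| ≤ K^C and |Y| ≤ K^C such that A ⊆ X·H and A ⊆ H·Y. -/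
/-!
Tao's symmetry-set argument. For `δ = 1 / (2K²)` let `S` be the set of `g` having at least
`δ|A|` representations `g = a a'⁻¹` with `a, a' ∈ A`. It is symmetric and contains `1`, and since
`|A A⁻¹| ≤ K²|A|` (Ruzsa's triangle inequality) the representations of elements outside `S`
account for at most half of all `|A|²` pairs, so `|S| ≥ |A|/2`. Every `b g c` with `g ∈ S` has at
least `δ|A|` representations in `(BA)(A⁻¹C)`, whence `δ|A| |BSC| ≤ |BA| |A⁻¹C|`. With `B = A⁻¹`,
`C = 1` this bounds `|SA| = |A⁻¹S|` by `2K⁴|A|`, and then with `B = C = S` it gives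
`|S³| ≤ 8K¹⁰|A|`. Small tripling makes `S²` an approximate group, and Ruzsa's covering
lemma covers `A` and `A⁻¹` by few translates of `S / S = S²`.
-/

open Pointwise Finset
open scoped RightActions

namespace Finset

variable {G : Type*} [Group G] [DecidableEq G] {A A' B B' C D S : Finset G} {δ : ℝ}

lemma convolution_mono (hA : A ⊆ A') (hB : B ⊆ B') (x : G) :
    A.convolution B x ≤ A'.convolution B' x :=
  card_le_card (filter_subset_filter _ (product_subset_product hA hB))

lemma sum_convolution (A B : Finset G) : ∑ x ∈ A * B, A.convolution B x = #A * #B := by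
  rw [← card_product]
  exact (card_eq_sum_card_fiberwise fun ab hab ↦
    mul_mem_mul (mem_product.1 hab).1 (mem_product.1 hab).2).symm

lemma convolution_le_convolution_mul_mul {b c : G} (hb : b ∈ B) (hc : c ∈ C) (x : G) :
    A.convolution D x ≤ (B * A).convolution (D * C) (b * x * c) :=
  calc A.convolution D x = (b • A).convolution (D <• c) (b * x * c) := by simp [mul_assoc]
    _ ≤ _ := convolution_mono (smul_finset_subset_mul hb) (op_smul_finset_subset_mul hc) _

/-- Tao's `Sym_δ(A) = {g | δ|A| ≤ |A ∩ gA|}`; note `A.convolution A⁻¹ g = #(A ∩ g • A)`. -/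
noncomputable def symmetrySet (δ : ℝ) (A : Finset G) : Finset G :=
  {g ∈ A * A⁻¹ | δ * #A ≤ A.convolution A⁻¹ g}

lemma mem_symmetrySet {g : G} :
    g ∈ symmetrySet δ A ↔ g ∈ A * A⁻¹ ∧ δ * #A ≤ A.convolution A⁻¹ g :=
  mem_filter

lemma symmetrySet_subset_mul_inv : symmetrySet δ A ⊆ A * A⁻¹ := filter_subset _ _

lemma inv_symmetrySet : (symmetrySet δ A)⁻¹ = symmetrySet δ A := by
  have hAA : (A * A⁻¹)⁻¹ = A * A⁻¹ := by rw [mul_inv_rev, inv_inv]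
  ext g
  rw [mem_inv', mem_symmetrySet, mem_symmetrySet, ← mem_inv', hAA, convolution_inv, inv_inv]

lemma one_mem_symmetrySet (hA : A.Nonempty) (hδ : δ ≤ 1) : 1 ∈ symmetrySet δ A := by
  refine mem_symmetrySet.2 ⟨by simpa [div_eq_mul_inv] using hA.one_mem_div, ?_⟩
  rw [← card_inter_smul, one_smul, inter_self]
  exact mul_le_of_le_one_left (Nat.cast_nonneg _) hδ

lemma card_le_card_symmetrySet_add (hA : A.Nonempty) (hδ : 0 ≤ δ) :
    (#A : ℝ) ≤ #(symmetrySet δ A) + δ * #(A * A⁻¹) := by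
  set S := symmetrySet δ A
  set R := {g ∈ A * A⁻¹ | ¬ δ * #A ≤ A.convolution A⁻¹ g}
  have hS : ∑ g ∈ S, (A.convolution A⁻¹ g : ℝ) ≤ #S * #A :=
    calc ∑ g ∈ S, (A.convolution A⁻¹ g : ℝ) ≤ ∑ _g ∈ S, (#A : ℝ) :=
          sum_le_sum fun _ _ ↦ mod_cast convolution_le_card_left
      _ = #S * #A := by rw [sum_const, nsmul_eq_mul]
  have hR : ∑ g ∈ R, (A.convolution A⁻¹ g : ℝ) ≤ #(A * A⁻¹) * (δ * #A) :=
    calc ∑ g ∈ R, (A.convolution A⁻¹ g : ℝ) ≤ ∑ _g ∈ R, δ * #A :=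
          sum_le_sum fun _ hg ↦ (not_le.1 (mem_filter.1 hg).2).le
      _ ≤ #(A * A⁻¹) * (δ * #A) := by
          rw [sum_const, nsmul_eq_mul]
          gcongr
          exact filter_subset _ _
  have hsum : (#A : ℝ) * #A ≤ (#S + δ * #(A * A⁻¹)) * #A :=
    calc (#A : ℝ) * #A = ∑ g ∈ A * A⁻¹, (A.convolution A⁻¹ g : ℝ) := by
          exact_mod_cast (card_inv A ▸ sum_convolution A A⁻¹).symm
      _ = ∑ g ∈ S, (A.convolution A⁻¹ g : ℝ) + ∑ g ∈ R, (A.convolution A⁻¹ g : ℝ) :=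
          (sum_filter_add_sum_filter_not _ _ _).symm
      _ ≤ (#S + δ * #(A * A⁻¹)) * #A := by linarith
  exact le_of_mul_le_mul_right hsum (by exact_mod_cast hA.card_pos)

lemma mul_card_mul_symmetrySet_mul_le (B C : Finset G) :
    δ * #A * #(B * symmetrySet δ A * C) ≤ #(B * A) * #(A⁻¹ * C) := by
  have hsub : B * symmetrySet δ A * C ⊆ B * A * (A⁻¹ * C) :=
    calc B * symmetrySet δ A * C ⊆ B * (A * A⁻¹) * C :=
          mul_subset_mul_right (mul_subset_mul_left symmetrySet_subset_mul_inv)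
      _ = B * A * (A⁻¹ * C) := by simp only [mul_assoc]
  have hrep : ∀ z ∈ B * symmetrySet δ A * C, δ * #A ≤ (B * A).convolution (A⁻¹ * C) z := by
    intro z hz
    obtain ⟨_, hbg, c, hc, rfl⟩ := mem_mul.1 hz
    obtain ⟨b, hb, g, hg, rfl⟩ := mem_mul.1 hbg
    exact (mem_symmetrySet.1 hg).2.trans
      (mod_cast convolution_le_convolution_mul_mul hb hc g)
  calc δ * #A * #(B * symmetrySet δ A * C)
      = ∑ _z ∈ B * symmetrySet δ A * C, δ * #A := by rw [sum_const, nsmul_eq_mul, mul_comm]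
    _ ≤ ∑ z ∈ B * symmetrySet δ A * C, ((B * A).convolution (A⁻¹ * C) z : ℝ) := sum_le_sum hrep
    _ ≤ ∑ z ∈ B * A * (A⁻¹ * C), ((B * A).convolution (A⁻¹ * C) z : ℝ) :=
        sum_le_sum_of_subset_of_nonneg hsub fun _ _ _ ↦ by positivity
    _ = #(B * A) * #(A⁻¹ * C) := by exact_mod_cast sum_convolution _ _

lemma mul_card_mul_symmetrySet_le (hA : A.Nonempty) (B : Finset G) :
    δ * #(B * symmetrySet δ A) ≤ #(B * A) := by
  have h := mul_card_mul_symmetrySet_mul_le (A := A) (δ := δ) B 1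
  rw [mul_one, mul_one, card_inv] at h
  exact le_of_mul_le_mul_left (by linarith) (by exact_mod_cast hA.card_pos : (0 : ℝ) < #A)

lemma exists_subset_mul_sq (hS : S.Nonempty) (hSinv : S⁻¹ = S) {L : ℝ} (h : #(B * S) ≤ L * #S) :
    ∃ X : Finset G, #X ≤ L ∧ B ⊆ X * S ^ 2 := by
  obtain ⟨X, -, hX, hBX⟩ := ruzsa_covering_mul hS h
  exact ⟨X, hX, by rwa [div_eq_mul_inv, hSinv, ← sq] at hBX⟩

lemma exists_subset_sq_mul (hS : S.Nonempty) (hSinv : S⁻¹ = S) {L : ℝ} (h : #(B⁻¹ * S) ≤ L * #S) :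
    ∃ Y : Finset G, #Y ≤ L ∧ B ⊆ S ^ 2 * Y := by
  obtain ⟨X, hX, hBX⟩ := exists_subset_mul_sq hS hSinv h
  exact ⟨X⁻¹, by rwa [card_inv], by simpa [mul_inv_rev, ← inv_pow, hSinv] using inv_subset_inv hBX⟩

lemma isApproximateSubgroup_coe_iff {K : ℝ} {H : Finset G} :
    IsApproximateSubgroup K (H : Set G) ↔
      1 ∈ H ∧ H⁻¹ = H ∧ ∃ Z : Finset G, #Z ≤ K ∧ H * H ⊆ Z * H := by
  have hcov (Z : Finset G) : (H : Set G) ^ 2 ⊆ (Z : Set G) • (H : Set G) ↔ H * H ⊆ Z * H := by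
    rw [← coe_subset, coe_mul, coe_mul, sq, smul_eq_mul]
  have hinv : (H : Set G)⁻¹ = H ↔ H⁻¹ = H := by rw [← coe_inv, coe_inj]
  exact ⟨fun ⟨h₁, hH, Z, hZ, hZH⟩ ↦ ⟨h₁, hinv.1 hH, Z, hZ, (hcov Z).1 hZH⟩,
    fun ⟨h₁, hH, Z, hZ, hZH⟩ ↦ ⟨h₁, hinv.2 hH, Z, hZ, (hcov Z).2 hZH⟩⟩

section Doubling

variable {K : ℝ}

lemma one_le_of_card_mul_le (hA : A.Nonempty) (hAA : (#(A * A) : ℝ) ≤ K * #A) : 1 ≤ K := by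
  have hA' : (0 : ℝ) < #A := by exact_mod_cast hA.card_pos
  have : (#A : ℝ) ≤ #(A * A) := by exact_mod_cast card_le_card_mul_left hA
  nlinarith

lemma card_mul_inv_le_sq (hA : A.Nonempty) (hAA : (#(A * A) : ℝ) ≤ K * #A) :
    (#(A * A⁻¹) : ℝ) ≤ K ^ 2 * #A := by
  refine le_of_mul_le_mul_right ?_ (by exact_mod_cast hA.card_pos : (0 : ℝ) < #A)
  calc (#(A * A⁻¹) : ℝ) * #A ≤ #(A * A) * #(A * A) := by
        exact_mod_cast ruzsa_triangle_inequality_mulInv_mul_mul A A A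
    _ ≤ (K * #A) * (K * #A) := mul_self_le_mul_self (Nat.cast_nonneg _) hAA
    _ = K ^ 2 * #A * #A := by ring

lemma card_inv_mul_le_sq (hA : A.Nonempty) (hAA : (#(A * A) : ℝ) ≤ K * #A) :
    (#(A⁻¹ * A) : ℝ) ≤ K ^ 2 * #A := by
  refine le_of_mul_le_mul_left ?_ (by exact_mod_cast hA.card_pos : (0 : ℝ) < #A)
  calc (#A : ℝ) * #(A⁻¹ * A) ≤ #(A * A) * #(A * A) := by
        exact_mod_cast ruzsa_triangle_inequality_invMul_mul_mul A A A
    _ ≤ (K * #A) * (K * #A) := mul_self_le_mul_self (Nat.cast_nonneg _) hAA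
    _ = #A * (K ^ 2 * #A) := by ring

lemma card_le_two_mul_card_symmetrySet_of_doubling (hA : A.Nonempty)
    (hAA : (#(A * A) : ℝ) ≤ K * #A) : (#A : ℝ) ≤ 2 * #(symmetrySet (2 * K ^ 2)⁻¹ A) := by
  have hK : 0 < K := by linarith [one_le_of_card_mul_le hA hAA]
  have h := card_le_card_symmetrySet_add (δ := (2 * K ^ 2)⁻¹) hA (by positivity)
  have h' : (2 * K ^ 2)⁻¹ * (#(A * A⁻¹) : ℝ) ≤ #A / 2 := by
    rw [inv_mul_le_iff₀ (by positivity)]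
    nlinarith [card_mul_inv_le_sq hA hAA]
  linarith

lemma card_mul_symmetrySet_le_of_doubling (hA : A.Nonempty) (hAA : (#(A * A) : ℝ) ≤ K * #A) :
    (#(A * symmetrySet (2 * K ^ 2)⁻¹ A) : ℝ) ≤ 2 * K ^ 3 * #A := by
  have hK : 0 < K := by linarith [one_le_of_card_mul_le hA hAA]
  have h := mul_card_mul_symmetrySet_le (δ := (2 * K ^ 2)⁻¹) hA A
  rw [inv_mul_le_iff₀ (by positivity)] at h
  nlinarith

lemma card_inv_mul_symmetrySet_le_of_doubling (hA : A.Nonempty)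
    (hAA : (#(A * A) : ℝ) ≤ K * #A) :
    (#(A⁻¹ * symmetrySet (2 * K ^ 2)⁻¹ A) : ℝ) ≤ 2 * K ^ 4 * #A := by
  have hK : 0 < K := by linarith [one_le_of_card_mul_le hA hAA]
  have h := mul_card_mul_symmetrySet_le (δ := (2 * K ^ 2)⁻¹) hA A⁻¹
  rw [inv_mul_le_iff₀ (by positivity)] at h
  nlinarith [card_inv_mul_le_sq hA hAA]

lemma card_symmetrySet_pow_three_le_of_doubling (hA : A.Nonempty)
    (hAA : (#(A * A) : ℝ) ≤ K * #A) :
    (#(symmetrySet (2 * K ^ 2)⁻¹ A ^ 3) : ℝ) ≤ 8 * K ^ 10 * #A := by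
  have hK : 0 < K := by linarith [one_le_of_card_mul_le hA hAA]
  set S := symmetrySet (2 * K ^ 2)⁻¹ A
  have hSA : #(S * A) = #(A⁻¹ * S) := by rw [← card_inv, mul_inv_rev, inv_symmetrySet]
  have hAinvS := card_inv_mul_symmetrySet_le_of_doubling hA hAA
  have h : (#A : ℝ) * #(S * S * S) ≤ 2 * K ^ 2 * (#(A⁻¹ * S) * #(A⁻¹ * S)) := by
    rw [← inv_mul_le_iff₀ (by positivity), ← mul_assoc]
    have := mul_card_mul_symmetrySet_mul_le (A := A) (δ := (2 * K ^ 2)⁻¹) S S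
    rwa [hSA] at this
  have h' : (#A : ℝ) * #(S * S * S) ≤ #A * (8 * K ^ 10 * #A) :=
    calc (#A : ℝ) * #(S * S * S) ≤ 2 * K ^ 2 * (#(A⁻¹ * S) * #(A⁻¹ * S)) := h
      _ ≤ 2 * K ^ 2 * ((2 * K ^ 4 * #A) * (2 * K ^ 4 * #A)) := by gcongr
      _ = #A * (8 * K ^ 10 * #A) := by ring
  rw [pow_succ, pow_two]
  exact le_of_mul_le_mul_left h' (by exact_mod_cast hA.card_pos)

theorem exists_symmetric_small_tripling_of_doubling (hA : A.Nonempty)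
    (hAA : (#(A * A) : ℝ) ≤ K * #A) :
    ∃ S : Finset G, 1 ∈ S ∧ S⁻¹ = S ∧ #(S ^ 3) ≤ 16 * K ^ 10 * #S ∧
      #(S ^ 2) ≤ 8 * K ^ 10 * #A ∧ #(A * S) ≤ 4 * K ^ 3 * #S ∧ #(A⁻¹ * S) ≤ 4 * K ^ 4 * #S := by
  have hK : 0 < K := by linarith [one_le_of_card_mul_le hA hAA]
  have hcardS := card_le_two_mul_card_symmetrySet_of_doubling hA hAA
  have hS₃ := card_symmetrySet_pow_three_le_of_doubling hA hAA
  refine ⟨symmetrySet (2 * K ^ 2)⁻¹ A, one_mem_symmetrySet hA (inv_le_one_of_one_le₀ ?_),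
    inv_symmetrySet, ?_, ?_, ?_, ?_⟩
  · nlinarith [one_le_of_card_mul_le hA hAA]
  · nlinarith [pow_pos hK 10]
  · exact le_trans (mod_cast card_pow_mono (by norm_num) (by norm_num)) hS₃
  · nlinarith [card_mul_symmetrySet_le_of_doubling hA hAA, pow_pos hK 3]
  · nlinarith [card_inv_mul_symmetrySet_le_of_doubling hA hAA, pow_pos hK 4]

end Doubling

end Finset

lemma mul_pow_le_pow_of_two_le {K c : ℝ} {m n N : ℕ} (hK : 2 ≤ K) (hc : c ≤ 2 ^ m)
    (hmnN : m + n ≤ N) : c * K ^ n ≤ K ^ N :=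
  calc c * K ^ n ≤ K ^ m * K ^ n := by gcongr; exact hc.trans (by gcongr)
    _ ≤ K ^ N := by rw [← pow_add]; exact pow_le_pow_right₀ (by linarith) hmnN

/-- Control of sets of small doubling by approximate groups: if `|A·A| ≤ K|A|` with `K ≥ 2`,
then there is a `K^C`-approximate group `H` of size `≤ C·K^C·|A|` such that `A` is covered
by `K^C` left-translates and by `K^C` right-translates of `H`. -/
theorem small_doubling_controlled_by_approximate_group :
    ∃ C : ℝ, 1 ≤ C ∧
      ∀ (G : Type*) [Group G] [DecidableEq G] (K : ℝ), 2 ≤ K →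
        ∀ A : Finset G, A.Nonempty → ((A * A).card : ℝ) ≤ K * A.card →
          ∃ H : Finset G,
            ((1 : G) ∈ H ∧ H⁻¹ = H ∧
              ∃ Z : Finset G, (Z.card : ℝ) ≤ K ^ C ∧ H * H ⊆ Z * H) ∧
            (H.card : ℝ) ≤ C * K ^ C * A.card ∧
            ∃ X Y : Finset G, (X.card : ℝ) ≤ K ^ C ∧ (Y.card : ℝ) ≤ K ^ C ∧
              A ⊆ X * H ∧ A ⊆ H * Y := by
  refine ⟨42, by norm_num, fun G _ _ K hK A hA hAA ↦ ?_⟩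
  rw [show K ^ (42 : ℝ) = K ^ 42 by norm_cast]
  obtain ⟨S, hS₁, hSinv, hS₃, hS₂, hAS, hAinvS⟩ :=
    exists_symmetric_small_tripling_of_doubling hA hAA
  have hH : IsApproximateSubgroup ((16 * K ^ 10) ^ 3) ((S ^ 2 : Finset G) : Set G) := by
    rw [coe_pow]
    exact .of_small_tripling hS₁ hSinv hS₃
  obtain ⟨h₁, hinv, Z, hZ, hZH⟩ := isApproximateSubgroup_coe_iff.1 hH
  obtain ⟨X, hX, hAX⟩ := exists_subset_mul_sq ⟨1, hS₁⟩ hSinv hAS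
  obtain ⟨Y, hY, hAY⟩ := exists_subset_sq_mul ⟨1, hS₁⟩ hSinv hAinvS
  refine ⟨S ^ 2, ⟨h₁, hinv, Z, ?_, hZH⟩, ?_, X, Y, ?_, ?_, hAX, hAY⟩
  · refine hZ.trans ?_
    rw [mul_pow, ← pow_mul]
    exact mul_pow_le_pow_of_two_le (m := 12) hK (by norm_num) (by norm_num)
  · calc (#(S ^ 2) : ℝ) ≤ 8 * K ^ 10 * #A := hS₂
      _ ≤ K ^ 42 * #A := by
          gcongr; exact mul_pow_le_pow_of_two_le (m := 3) hK (by norm_num) (by norm_num)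
      _ ≤ 42 * K ^ 42 * #A := by gcongr; exact le_mul_of_one_le_left (by positivity) (by norm_num)
  · exact hX.trans (mul_pow_le_pow_of_two_le (m := 2) hK (by norm_num) (by norm_num))
  · exact hY.trans (mul_pow_le_pow_of_two_le (m := 2) hK (by norm_num) (by norm_num))
end

section
/- Let d be a positive integer, let K > 0 be a real number, and let A be a finite nonempty subset of ℝ^d whose affine span is all of ℝ^d (i.e. A is not contained in any proper affine subspace of ℝ^d). If |A + A| ≤ K·|A|, then d ≤ K − 1 + d(d+1)/(2|A|). (Freiman's lemma.) -/
open Pointwise Module Finset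

/-!
Add the points of `A` one at a time in increasing order of a linear functional `f` that is
injective on `A`, and check that `2 |A + A| ≥ 2 (r + 1) |A| - r (r + 1)` survives each step, where
`r` is the dimension of the affine span. When the `f`-largest point `a` joins `s`, the sums `a + x` outside `s + s` are new in
`A + A`. If `a` lies off the affine span of `s`, all `|A|` of them are new and `r` grows by one.
Otherwise `r` is unchanged and we need `r + 1` new sums: `2a` is new because `f` is maximal at
`a`, and `a + x` is new exactly when `x - a` is not the sum of two vectors of `G = s - a`. Since
`f < 0` on `G`, descending in `f` shows that these indecomposable vectors span `G`, hence the
direction of the affine span, so there are at least `r` of them.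
-/

theorem Module.exists_dual_injOn {K V : Type*} [Field K] [Infinite K] [AddCommGroup V]
    [Module K V] {s : Set V} (hs : s.Finite) : ∃ f : Dual K V, Set.InjOn f s := by
  classical
  let D : Finset {v : V // v ≠ 0} := (hs.toFinset.offDiag.image fun p => p.1 - p.2).subtype (· ≠ 0)
  have hker (v : {v : V // v ≠ 0}) : LinearMap.ker (Dual.eval K V v) ≠ ⊤ := by
    rw [Ne, LinearMap.ker_eq_top]
    exact fun h => v.2 ((forall_dual_apply_eq_zero_iff K v.1).mp (LinearMap.congr_fun h))
  obtain ⟨f, -, hf⟩ := Set.exists_of_ssubset <|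
    Submodule.iUnion_ssubset_of_forall_ne_top_of_card_lt D _ hker
      (by simp [ENat.card_eq_top_of_infinite])
  refine ⟨f, fun x hx y hy hxy => by_contra fun hne => hf ?_⟩
  simp only [Set.mem_iUnion, SetLike.mem_coe, LinearMap.mem_ker, Dual.eval_apply]
  refine ⟨⟨x - y, sub_ne_zero.mpr hne⟩, ?_, by rw [map_sub, hxy, sub_self]⟩
  exact mem_subtype.mpr (mem_image.mpr ⟨(x, y), by simp [hx, hy, hne], rfl⟩)

theorem Finset.card_add_self_add_card_filter_le {M : Type*} [AddCancelCommMonoid M]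
    [DecidableEq M] {s t : Finset M} {a : M} (hst : s ⊆ t) (ha : a ∈ t) :
    #(s + s) + #{x ∈ t | a + x ∉ s + s} ≤ #(t + t) := by
  set N := {x ∈ t | a + x ∉ s + s}
  have hdisj : Disjoint (s + s) (N.image (a + ·)) := by
    rw [disjoint_right]
    rintro _ hy
    obtain ⟨x, hx, rfl⟩ := mem_image.mp hy
    exact (mem_filter.mp hx).2
  have hsub : N.image (a + ·) ⊆ t + t := by
    rintro _ hy
    obtain ⟨x, hx, rfl⟩ := mem_image.mp hy
    exact add_mem_add ha (mem_filter.mp hx).1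
  calc #(s + s) + #N = #((s + s) ∪ N.image (a + ·)) := by
        rw [card_union_of_disjoint hdisj, card_image_of_injective _ (add_right_injective a)]
    _ ≤ #(t + t) := card_le_card (union_subset (add_subset_add hst hst) hsub)

theorem finrank_vectorSpan_insert_of_notMem_affineSpan {k V P : Type*} [DivisionRing k]
    [AddCommGroup V] [Module k V] [AddTorsor V P] {s : Set P} {p : P} (hs : s.Nonempty)
    [FiniteDimensional k (vectorSpan k s)] (hp : p ∉ affineSpan k s) :
    finrank k (vectorSpan k (insert p s)) = finrank k (vectorSpan k s) + 1 := by
  obtain ⟨q, hq⟩ := hs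
  refine le_antisymm (finrank_vectorSpan_insert_le_set k s p)
    (Submodule.finrank_lt_finrank_of_lt ?_)
  refine (vectorSpan_mono k (Set.subset_insert p s)).lt_of_ne fun heq => hp ?_
  have hpq : p -ᵥ q ∈ vectorSpan k s :=
    heq ▸ vsub_mem_vectorSpan k (Set.mem_insert p s) (Set.mem_insert_of_mem p hq)
  rwa [← direction_affineSpan,
    AffineSubspace.vsub_right_mem_direction_iff_mem (subset_affineSpan k s hq)] at hpq

theorem Finset.add_notMem_add_self_of_notMem_affineSpan {k V : Type*} [Ring k]
    [AddCommGroup V] [Module k V] [DecidableEq V] {s : Finset V} {a : V}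
    (ha : a ∉ affineSpan k (s : Set V)) {x : V} (hx : x ∈ s) : a + x ∉ s + s := by
  intro hax
  obtain ⟨y, hy, z, hz, hyz⟩ := mem_add.mp hax
  have ha' : a = (y -ᵥ x) +ᵥ z := by
    rw [vsub_eq_sub, vadd_eq_add, ← add_sub_cancel_right a x, ← hyz]
    abel
  refine ha (ha' ▸ AffineSubspace.vadd_mem_of_mem_direction ?_ (subset_affineSpan k _ hz))
  rw [direction_affineSpan]
  exact vsub_mem_vectorSpan k hy hx

section Freiman

variable {k V : Type*} [Field k] [LinearOrder k] [IsStrictOrderedRing k] [AddCommGroup V]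
  [Module k V] [DecidableEq V]

theorem Finset.span_sdiff_add_self_eq_span (f : Dual k V) {G : Finset V}
    (hG : ∀ g ∈ G, f g < 0) :
    Submodule.span k (↑(G \ (G + G)) : Set V) = Submodule.span k (G : Set V) := by
  classical
  set W := Submodule.span k (↑(G \ (G + G)) : Set V)
  refine le_antisymm (Submodule.span_mono (by simp)) (Submodule.span_le.mpr ?_)
  by_contra hsub
  obtain ⟨g₀, hg₀, hg₀W⟩ := Set.not_subset.mp hsub
  obtain ⟨g, hg, hmax⟩ :=
    (G.filter (· ∉ W)).exists_max_image f ⟨g₀, mem_filter.mpr ⟨hg₀, hg₀W⟩⟩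
  obtain ⟨hgG, hgW⟩ := mem_filter.mp hg
  have hW : ∀ x ∈ G, f g < f x → x ∈ W := fun x hx hlt =>
    by_contra fun hxW => (hmax x (mem_filter.mpr ⟨hx, hxW⟩)).not_gt hlt
  by_cases hdec : g ∈ G + G
  · obtain ⟨x, hx, y, hy, rfl⟩ := mem_add.mp hdec
    have hx' := hG x hx
    have hy' := hG y hy
    refine hgW (W.add_mem (hW x hx ?_) (hW y hy ?_)) <;> rw [map_add] <;> linarith
  · exact hgW (Submodule.subset_span (mem_sdiff.mpr ⟨hgG, hdec⟩))

variable {f : Dual k V} {s : Finset V} {a : V}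

theorem Finset.add_self_notMem_add_self_of_forall_lt (h : ∀ x ∈ s, f x < f a) :
    a + a ∉ s + s := by
  intro haa
  obtain ⟨y, hy, z, hz, hyz⟩ := mem_add.mp haa
  have hf := congrArg f hyz
  rw [map_add, map_add] at hf
  linarith [h y hy, h z hz]

theorem Finset.finrank_vectorSpan_insert_lt_card_filter (h : ∀ x ∈ s, f x < f a) :
    finrank k (vectorSpan k (insert a (s : Set V))) < #{x ∈ insert a s | a + x ∉ s + s} := by
  set N := {x ∈ insert a s | a + x ∉ s + s}
  set G := s.image (· - a)
  have hG : ∀ g ∈ G, f g < 0 := by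
    simp only [G, mem_image, forall_exists_index, and_imp, forall_apply_eq_imp_iff₂, map_sub]
    exact fun x hx => sub_neg.mpr (h x hx)
  have hspan : vectorSpan k (insert a (s : Set V)) = Submodule.span k (G : Set V) := by
    rw [vectorSpan_eq_span_vsub_set_right k (Set.mem_insert a _), Set.image_insert_eq, vsub_self,
      Submodule.span_insert_zero]
    simp [G]
  have hind : G \ (G + G) ⊆ (N.erase a).image (· - a) := by
    intro g hg
    obtain ⟨hgG, hdec⟩ := mem_sdiff.mp hg
    obtain ⟨x, hx, rfl⟩ := mem_image.mp hgG
    refine mem_image_of_mem _ (mem_erase.mpr ⟨(h x hx).ne ∘ congrArg f, ?_⟩)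
    refine mem_filter.mpr ⟨mem_insert_of_mem hx, fun hax => hdec ?_⟩
    obtain ⟨y, hy, z, hz, hyz⟩ := mem_add.mp hax
    refine mem_add.mpr ⟨y - a, mem_image_of_mem _ hy, z - a, mem_image_of_mem _ hz, ?_⟩
    rw [← add_sub_cancel_left a x, ← hyz]
    abel
  have haN : a ∈ N :=
    mem_filter.mpr ⟨mem_insert_self a s, add_self_notMem_add_self_of_forall_lt h⟩
  calc finrank k (vectorSpan k (insert a (s : Set V)))
      = finrank k (Submodule.span k (G : Set V)) := by rw [hspan]
    _ ≤ finrank k (Submodule.span k (((N.erase a).image (· - a) : Finset V) : Set V)) := by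
      rw [← span_sdiff_add_self_eq_span f hG]
      exact Submodule.finrank_mono (Submodule.span_mono hind)
    _ ≤ #((N.erase a).image (· - a)) := finrank_span_finset_le_card _
    _ ≤ #(N.erase a) := card_image_le
    _ < #N := card_erase_lt_of_mem haN

theorem Finset.freiman_card_add_self_of_injOn (f : Dual k V) (A : Finset V)
    (hf : Set.InjOn f A) :
    2 * (finrank k (vectorSpan k (A : Set V)) + 1) * #A ≤ 2 * #(A + A) +
      finrank k (vectorSpan k (A : Set V)) * (finrank k (vectorSpan k (A : Set V)) + 1) := by
  induction A using Finset.induction_on_max_value f with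
  | empty => simp
  | insert a s has hle ih =>
    rw [coe_insert] at hf ⊢
    have hlt : ∀ x ∈ s, f x < f a := fun x hx => (hle x hx).lt_of_ne fun hfx =>
      has (hf (Set.mem_insert_of_mem a hx) (Set.mem_insert a _) hfx ▸ hx)
    specialize ih (hf.mono (Set.subset_insert a _))
    have hgrowth := card_add_self_add_card_filter_le (subset_insert a s) (mem_insert_self a s)
    rw [card_insert_of_notMem has]
    by_cases hspan : a ∈ affineSpan k (s : Set V)
    · have hN := finrank_vectorSpan_insert_lt_card_filter hlt
      rw [vectorSpan_insert_eq_vectorSpan hspan] at hN ⊢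
      nlinarith
    · rcases s.eq_empty_or_nonempty with rfl | hs
      · rw [coe_empty, LawfulSingleton.insert_empty_eq, vectorSpan_singleton, finrank_bot]
        simp
      have hN : {x ∈ insert a s | a + x ∉ s + s} = insert a s := by
        refine filter_true_of_mem fun x hx => ?_
        rcases mem_insert.mp hx with rfl | hx
        · exact add_self_notMem_add_self_of_forall_lt hlt
        · exact add_notMem_add_self_of_notMem_affineSpan hspan hx
      rw [hN, card_insert_of_notMem has] at hgrowth
      have := finiteDimensional_vectorSpan_of_finite k s.finite_toSet
      rw [finrank_vectorSpan_insert_of_notMem_affineSpan hs hspan]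
      nlinarith

theorem Finset.freiman_card_add_self (A : Finset V) :
    2 * (finrank k (vectorSpan k (A : Set V)) + 1) * #A ≤ 2 * #(A + A) +
      finrank k (vectorSpan k (A : Set V)) * (finrank k (vectorSpan k (A : Set V)) + 1) := by
  obtain ⟨f, hf⟩ := exists_dual_injOn (K := k) A.finite_toSet
  exact A.freiman_card_add_self_of_injOn f hf

end Freiman

theorem freiman_lemma_general (d : ℕ) (K : ℝ)
    (A : Set (Fin d → ℝ)) (hfin : A.Finite) (hne : A.Nonempty)
    (hspan : affineSpan ℝ A = ⊤)
    (h : ((A + A).ncard : ℝ) ≤ K * A.ncard) :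
    (d : ℝ) ≤ K - 1 + (d * (d + 1)) / (2 * A.ncard) := by
  lift A to Finset (Fin d → ℝ) using hfin
  have hdim : finrank ℝ (vectorSpan ℝ (A : Set (Fin d → ℝ))) = d := by
    rw [← direction_affineSpan, hspan, AffineSubspace.direction_top, finrank_top, finrank_fin_fun]
  have hfreiman := A.freiman_card_add_self (k := ℝ)
  rw [hdim] at hfreiman
  simp only [← coe_add, Set.ncard_coe_finset] at h ⊢
  have hA : (0 : ℝ) < #A := by exact_mod_cast (coe_nonempty.mp hne).card_pos
  have hfreimanℝ : 2 * ((d : ℝ) + 1) * #A ≤ 2 * #(A + A) + d * (d + 1) := by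
    exact_mod_cast hfreiman
  have hgap : (d : ℝ) + 1 - K ≤ d * (d + 1) / (2 * #A) := by
    rw [le_div_iff₀ (by positivity)]
    nlinarith
  linarith

/-- Freiman's lemma: if a finite subset of `ℝ^d` affinely spanning `ℝ^d` satisfies
`|A + A| ≤ K|A|`, then `d ≤ K - 1 + d(d+1)/(2|A|)`. -/
theorem freiman_lemma (d : ℕ) (hd : 0 < d) (K : ℝ) (hK : 0 < K)
    (A : Set (Fin d → ℝ)) (hfin : A.Finite) (hne : A.Nonempty)
    (hspan : affineSpan ℝ A = ⊤)
    (h : ((A + A).ncard : ℝ) ≤ K * A.ncard) :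
    (d : ℝ) ≤ K - 1 + (d * (d + 1)) / (2 * A.ncard) :=
  freiman_lemma_general d K A hfin hne hspan h
end

section
/- Let G be a group, let S ⊆ G be a finite nonempty subset, and let C > 0 and d ≥ 0 be real numbers such that |Sⁿ| ≤ C·n^d for all integers n ≥ 1, where Sⁿ denotes the n-fold product set S·S·⋯·S. Then there are infinitely many n with |S^{2n}| < (2^d + 1)·|Sⁿ|; that is, for every integer N there exists n ≥ N such that |S^{2n}| < (2^d + 1)·|Sⁿ|. (Infinitely many balls Sⁿ have doubling constant less than 2^d + 1, since Sⁿ·Sⁿ = S^{2n}.) -/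
/-!
If `|S^{2m}| ≥ K |S^m|` with `K > 2^d` held for all `m ≥ M`, iterating would give
`|S^{2^k M}| ≥ K^k |S^M|`, while polynomial growth caps it by `C (2^k M)^d = (2^d)^k C M^d`;
since `K / 2^d > 1`, this fails for large `k`.
-/

open Pointwise

theorem pow_mul_le_apply_two_pow_mul {α : Type*} [Semiring α] [PartialOrder α]
    [IsOrderedRing α] {f : ℕ → α} {K : α} (hK : 0 ≤ K) {M : ℕ}
    (hf : ∀ m, M ≤ m → K * f m ≤ f (2 * m)) (k : ℕ) :
    K ^ k * f M ≤ f (2 ^ k * M) := by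
  induction k with
  | zero => simp
  | succ k ih =>
    calc K ^ (k + 1) * f M = K * (K ^ k * f M) := by rw [pow_succ', mul_assoc]
      _ ≤ K * f (2 ^ k * M) := mul_le_mul_of_nonneg_left ih hK
      _ ≤ f (2 * (2 ^ k * M)) := hf _ (Nat.le_mul_of_pos_left M (Nat.two_pow_pos k))
      _ = f (2 ^ (k + 1) * M) := by rw [pow_succ', mul_assoc]

theorem natCast_two_pow_mul_rpow (k M : ℕ) (d : ℝ) :
    ((2 ^ k * M : ℕ) : ℝ) ^ d = ((2 : ℝ) ^ d) ^ k * (M : ℝ) ^ d := by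
  push_cast
  rw [Real.mul_rpow (by positivity) (by positivity), Real.rpow_pow_comm zero_le_two]

theorem exists_ge_apply_two_mul_lt_of_le_rpow {f : ℕ → ℝ} (hf_pos : ∀ n, 0 < f n)
    {C d : ℝ} (hf : ∀ n : ℕ, 1 ≤ n → f n ≤ C * (n : ℝ) ^ d) {K : ℝ} (hK : (2 : ℝ) ^ d < K)
    (N : ℕ) : ∃ n, N ≤ n ∧ f (2 * n) < K * f n := by
  by_contra! hdoubling
  set M := max N 1
  have h2d : (0 : ℝ) < 2 ^ d := Real.rpow_pos_of_pos two_pos d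
  have hbound : ∀ k : ℕ, (K / 2 ^ d) ^ k * f M ≤ C * (M : ℝ) ^ d := by
    intro k
    have hgrowth := (pow_mul_le_apply_two_pow_mul (h2d.trans hK).le
      (fun m hm => hdoubling m (le_of_max_le_left hm)) k).trans
      (hf _ (Nat.mul_pos (Nat.two_pow_pos k) (le_max_right N 1)))
    rw [natCast_two_pow_mul_rpow, mul_left_comm] at hgrowth
    rw [div_pow, div_mul_eq_mul_div, div_le_iff₀ (by positivity), mul_comm (C * _)]
    exact hgrowth
  obtain ⟨k, hk⟩ := pow_unbounded_of_one_lt (C * (M : ℝ) ^ d / f M)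
    ((one_lt_div h2d).2 hK)
  exact (hbound k).not_gt ((div_lt_iff₀ (hf_pos M)).1 hk)

theorem polynomial_growth_small_doubling_general (G : Type*) [Group G] [DecidableEq G]
    (S : Finset G) (hS : S.Nonempty) (C d : ℝ)
    (h : ∀ n : ℕ, 1 ≤ n → ((S ^ n).card : ℝ) ≤ C * (n : ℝ) ^ d) :
    ∀ N : ℕ, ∃ n : ℕ, N ≤ n ∧
      ((S ^ (2 * n)).card : ℝ) < ((2 : ℝ) ^ d + 1) * (S ^ n).card :=
  exists_ge_apply_two_mul_lt_of_le_rpow (fun n => by exact_mod_cast (hS.pow (n := n)).card_pos) h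
    (lt_add_one _)

/-- If `|Sⁿ| ≤ C·n^d` for all `n ≥ 1`, then infinitely many of the balls `Sⁿ` have doubling
constant less than `2^d + 1`, i.e. `|S^{2n}| < (2^d + 1)|Sⁿ|`. -/
theorem polynomial_growth_small_doubling (G : Type*) [Group G] [DecidableEq G]
    (S : Finset G) (hS : S.Nonempty) (C d : ℝ) (hC : 0 < C) (hd : 0 ≤ d)
    (h : ∀ n : ℕ, 1 ≤ n → ((S ^ n).card : ℝ) ≤ C * (n : ℝ) ^ d) :
    ∀ N : ℕ, ∃ n : ℕ, N ≤ n ∧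
      ((S ^ (2 * n)).card : ℝ) < ((2 : ℝ) ^ d + 1) * (S ^ n).card :=
  polynomial_growth_small_doubling_general G S hS C d h
end

section
/- For every real K ≥ 1 there exists a constant c = c(K) > 0 such that the following holds (the Croot–Sisask/Sanders theorem). Let G be a group and let A ⊆ G be a finite K-approximate group, i.e. 1 ∈ A, A⁻¹ = A, and there is a set X ⊆ G with |X| ≤ K and A·A ⊆ X·A. Then there exists a finite set S ⊆ G with |S| ≥ c·|A| such that S⁸ ⊆ A⁴, where Sⁿ denotes the n-fold product set. -/
open Pointwise

private lemma sum_pi_single' {G : Type*} [DecidableEq G] {k : ℕ} (A : Finset G) (h : G → ℝ)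
    (i : Fin k) :
    ∑ z ∈ Fintype.piFinset (fun _ : Fin k => A), h (z i)
      = (A.card : ℝ) ^ (k - 1) * ∑ a ∈ A, h a := by
  classical
  have key := Finset.prod_univ_sum (fun _ : Fin k => A) (fun l a => if l = i then h a else (1:ℝ))
  have hR : ∀ z : Fin k → G, (∏ l : Fin k, if l = i then h (z l) else (1:ℝ)) = h (z i) := by
    intro z
    rw [Finset.prod_ite_eq' Finset.univ i (fun l => h (z l))]
    simp
  have hL : (∏ l : Fin k, ∑ a ∈ A, if l = i then h a else (1:ℝ))
      = (∑ a ∈ A, h a) * (A.card : ℝ) ^ (k - 1) := by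
    rw [← Finset.mul_prod_erase Finset.univ _ (Finset.mem_univ i)]
    have h2 : ∀ l ∈ Finset.univ.erase i,
        (∑ a ∈ A, if l = i then h a else (1:ℝ)) = (A.card : ℝ) := by
      intro l hl
      simp [(Finset.mem_erase.mp hl).1]
    rw [Finset.prod_congr rfl h2, Finset.prod_const,
      Finset.card_erase_of_mem (Finset.mem_univ i)]
    simp [Finset.card_univ]
  calc ∑ z ∈ Fintype.piFinset (fun _ : Fin k => A), h (z i)
      = ∑ z ∈ Fintype.piFinset (fun _ : Fin k => A),
          ∏ l : Fin k, if l = i then h (z l) else (1:ℝ) :=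
        Finset.sum_congr rfl fun z _ => (hR z).symm
    _ = ∏ l : Fin k, ∑ a ∈ A, if l = i then h a else (1:ℝ) := key.symm
    _ = (A.card : ℝ) ^ (k - 1) * ∑ a ∈ A, h a := by rw [hL]; ring

private lemma sum_pi_pair' {G : Type*} [DecidableEq G] {k : ℕ} (A : Finset G) (f g : G → ℝ)
    (i j : Fin k) (hij : i ≠ j) (hf : ∑ a ∈ A, f a = 0) :
    ∑ z ∈ Fintype.piFinset (fun _ : Fin k => A), f (z i) * g (z j) = 0 := by
  classical
  have key := Finset.prod_univ_sum (fun _ : Fin k => A)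
    (fun l a => (if l = i then f a else (1:ℝ)) * (if l = j then g a else (1:ℝ)))
  have hR : ∀ z : Fin k → G,
      (∏ l : Fin k, (if l = i then f (z l) else (1:ℝ)) * (if l = j then g (z l) else (1:ℝ)))
        = f (z i) * g (z j) := by
    intro z
    rw [Finset.prod_mul_distrib, Finset.prod_ite_eq' Finset.univ i (fun l => f (z l)),
      Finset.prod_ite_eq' Finset.univ j (fun l => g (z l))]
    simp
  have hzero : (∑ a ∈ A, (if i = i then f a else (1:ℝ)) * (if i = j then g a else (1:ℝ))) = 0 := by
    simp [hij, hf]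
  calc ∑ z ∈ Fintype.piFinset (fun _ : Fin k => A), f (z i) * g (z j)
      = ∑ z ∈ Fintype.piFinset (fun _ : Fin k => A),
        ∏ l : Fin k, (if l = i then f (z l) else (1:ℝ)) * (if l = j then g (z l) else (1:ℝ)) := by
        exact Finset.sum_congr rfl fun z _ => (hR z).symm
    _ = ∏ l : Fin k, ∑ a ∈ A, (if l = i then f a else (1:ℝ)) * (if l = j then g a else (1:ℝ)) :=
        key.symm
    _ = 0 := Finset.prod_eq_zero (Finset.mem_univ i) hzero

private lemma sum_translate' {G : Type*} [Group G] [DecidableEq G] (u : G → ℝ) (V U : Finset G)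
    (t : G) (hsupp : ∀ x, u x ≠ 0 → x ∈ V) (hU : ∀ v ∈ V, t * v ∈ U) :
    ∑ x ∈ U, u (t⁻¹ * x) = ∑ x ∈ V, u x := by
  have h1 : ∑ x ∈ V.image (fun v => t * v), u (t⁻¹ * x) = ∑ x ∈ V, u x := by
    rw [Finset.sum_image (fun a _ b _ h => mul_left_cancel h)]
    exact Finset.sum_congr rfl fun v _ => by simp
  rw [← h1]
  refine (Finset.sum_subset ?_ ?_).symm
  · intro x hx
    obtain ⟨v, hv, rfl⟩ := Finset.mem_image.mp hx
    exact hU v hv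
  · intro x hx hnx
    by_contra h0
    exact hnx (Finset.mem_image.mpr ⟨t⁻¹ * x, hsupp _ h0, by simp⟩)

set_option maxHeartbeats 2000000 in
/-- The Croot–Sisask/Sanders theorem: a `K`-approximate group `A` contains a large set `S`
(of size `≫_K |A|`) with `S⁸ ⊆ A⁴`. -/
theorem croot_sisask_sanders (K : ℝ) (hK : 1 ≤ K) :
    ∃ c : ℝ, 0 < c ∧
      ∀ (G : Type*) [Group G] [DecidableEq G] (A : Finset G),
        (1 : G) ∈ A → A⁻¹ = A →
        (∃ X : Finset G, (X.card : ℝ) ≤ K ∧ A * A ⊆ X * A) →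
        ∃ S : Finset G, c * A.card ≤ (S.card : ℝ) ∧ S ^ 8 ⊆ A ^ 4 := by
  classical
  have hKpos : (0:ℝ) < K := lt_of_lt_of_le one_pos hK
  set k : ℕ := ⌈(512:ℝ) * K⌉₊ + 1 with hk_def
  have hkK : (512:ℝ) * K < k := by
    have h := Nat.le_ceil ((512:ℝ) * K)
    have : (⌈(512:ℝ) * K⌉₊ : ℝ) < k := by
      rw [hk_def]; push_cast; linarith
    linarith
  have hk1 : 1 ≤ k := Nat.le_add_left 1 _
  have hkpos : (0:ℝ) < k := by positivity
  haveI : NeZero k := ⟨by omega⟩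
  refine ⟨1 / (2 * K ^ (k - 1)), by positivity, ?_⟩
  intro G _ _ A hA1 hAsymm hcov
  obtain ⟨X, hXcard, hXA⟩ := hcov
  have hA0 : A.Nonempty := ⟨1, hA1⟩
  have hAcard : (1:ℝ) ≤ A.card := by exact_mod_cast Finset.card_pos.mpr hA0
  have hAcpos : (0:ℝ) < A.card := by linarith
  -- the set B = A²
  set B : Finset G := A * A with hB_def
  have hinvmem : ∀ y : G, y ∈ A → y⁻¹ ∈ A := by
    intro y hy
    rw [← hAsymm]
    exact Finset.inv_mem_inv hy
  have hBA : ∀ a ∈ A, a • A ⊆ B := by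
    intro a ha
    rw [← Finset.singleton_mul]
    exact Finset.mul_subset_mul_right (Finset.singleton_subset_iff.mpr ha)
  have hBcard : (B.card : ℝ) ≤ K * A.card := by
    have h1 : B.card ≤ (X * A).card := Finset.card_le_card hXA
    have h2 : (X * A).card ≤ X.card * A.card := Finset.card_mul_le
    have : (B.card : ℝ) ≤ (X.card : ℝ) * A.card := by exact_mod_cast le_trans h1 h2
    nlinarith
  have hBinv : B⁻¹ = B := by rw [hB_def, mul_inv_rev, hAsymm]
  have hB4 : A ^ 4 = B * B := by
    calc A ^ 4 = A ^ 2 * A ^ 2 := by rw [← pow_add]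
      _ = B * B := by rw [hB_def, pow_two]
  have hBsubA4 : B ⊆ A ^ 4 := by
    rw [hB_def, ← pow_two]
    exact Finset.pow_subset_pow_right hA1 (by norm_num)
  -- membership helpers
  have hmem : ∀ (x a : G), a ∈ x • A ↔ x⁻¹ * a ∈ A := by
    intro x a
    rw [← Finset.inv_smul_mem_iff, smul_eq_mul]
  have hflip : ∀ x a : G, x ∈ a • A ↔ a ∈ x • A := by
    intro x a
    rw [hmem, hmem]
    constructor
    · intro h
      have := hinvmem _ h
      simpa using this
    · intro h
      have := hinvmem _ h
      simpa using this
  -- the function P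
  set P : G → ℕ := fun x => (A ∩ x • A).card with hP_def
  have hPle : ∀ x, P x ≤ A.card := fun x => Finset.card_le_card Finset.inter_subset_left
  have hPmem : ∀ x, 0 < P x → x ∈ B := by
    intro x hx
    obtain ⟨a, ha⟩ := Finset.card_pos.mp hx
    rw [Finset.mem_inter] at ha
    have h2 : x⁻¹ * a ∈ A := (hmem x a).mp ha.2
    have : x = a * (x⁻¹ * a)⁻¹ := by group
    rw [this, hB_def]
    exact Finset.mul_mem_mul ha.1 (hinvmem _ h2)
  have hPsum : ∑ x ∈ B, (P x : ℝ) = (A.card : ℝ) ^ 2 := by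
    have h1 : ∀ x : G, P x = ∑ a ∈ A, if a ∈ x • A then 1 else 0 := by
      intro x
      show (A ∩ x • A).card = _
      rw [← Finset.filter_mem_eq_inter, Finset.card_filter]
    have h2 : ∀ a ∈ A, ∑ x ∈ B, (if x ∈ a • A then (1:ℕ) else 0) = A.card := by
      intro a ha
      rw [← Finset.card_filter, Finset.filter_mem_eq_inter,
        Finset.inter_eq_right.mpr (hBA a ha), Finset.card_smul_finset]
    have hN : ∑ x ∈ B, P x = A.card ^ 2 := by
      calc ∑ x ∈ B, P x = ∑ x ∈ B, ∑ a ∈ A, (if a ∈ x • A then 1 else 0) :=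
            Finset.sum_congr rfl fun x _ => h1 x
        _ = ∑ a ∈ A, ∑ x ∈ B, (if a ∈ x • A then 1 else 0) := Finset.sum_comm
        _ = ∑ a ∈ A, ∑ x ∈ B, (if x ∈ a • A then 1 else 0) := by
            refine Finset.sum_congr rfl fun a _ => Finset.sum_congr rfl fun x _ => ?_
            exact if_congr (hflip x a).symm rfl rfl
        _ = ∑ a ∈ A, A.card := Finset.sum_congr rfl h2
        _ = A.card ^ 2 := by rw [Finset.sum_const, smul_eq_mul, pow_two]
    have := congrArg (Nat.cast : ℕ → ℝ) hN
    push_cast at this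
    convert this using 2
  -- the random variables
  set Y : G → G → ℝ := fun x a => (if x ∈ a • A then (A.card : ℝ) else 0) - P x with hY_def
  have hfiltP : ∀ x : G, (A.filter fun a => x ∈ a • A) = A ∩ x • A := by
    intro x
    rw [← Finset.filter_mem_eq_inter]
    exact Finset.filter_congr fun a _ => by rw [hflip]
  have hYsum : ∀ x : G, ∑ a ∈ A, Y x a = 0 := by
    intro x
    rw [Finset.sum_sub_distrib, Finset.sum_const, ← Finset.sum_filter, Finset.sum_const, hfiltP]
    have hPx : (A ∩ x • A).card = P x := rfl
    rw [hPx, nsmul_eq_mul, nsmul_eq_mul]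
    ring
  have hYsq : ∀ x : G, ∑ a ∈ A, (Y x a) ^ 2 ≤ (A.card : ℝ) ^ 2 * P x := by
    intro x
    rw [← Finset.sum_filter_add_sum_filter_not A (fun a => x ∈ a • A)]
    have e1 : ∀ a ∈ A.filter (fun a => x ∈ a • A), (Y x a) ^ 2 = ((A.card : ℝ) - P x) ^ 2 := by
      intro a ha
      rw [hY_def]
      simp only [(Finset.mem_filter.mp ha).2, if_pos]
    have e2 : ∀ a ∈ A.filter (fun a => ¬ x ∈ a • A), (Y x a) ^ 2 = (P x : ℝ) ^ 2 := by
      intro a ha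
      rw [hY_def]
      simp only [(Finset.mem_filter.mp ha).2, if_neg, not_false_iff]
      ring
    rw [Finset.sum_congr rfl e1, Finset.sum_congr rfl e2, Finset.sum_const, Finset.sum_const,
      hfiltP]
    have hc2 : (A.filter fun a => ¬ x ∈ a • A).card = A.card - P x := by
      have := Finset.card_filter_add_card_filter_not (s := A) (p := fun a => x ∈ a • A)
      rw [hfiltP] at this
      have hPx : (A ∩ x • A).card = P x := rfl
      rw [hPx] at this
      omega
    rw [hc2]
    have hple := hPle x
    have hc3 : ((A.card - P x : ℕ) : ℝ) = (A.card : ℝ) - P x := by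
      push_cast [hple]
      ring
    rw [nsmul_eq_mul, nsmul_eq_mul, hc3]
    have hp0 : (0:ℝ) ≤ P x := by positivity
    have hpn : (P x : ℝ) ≤ A.card := by exact_mod_cast hple
    nlinarith [sq_nonneg ((A.card : ℝ) - P x)]
  -- empirical sums
  set F : (Fin k → G) → G → ℝ :=
    fun z x => ∑ i : Fin k, (if x ∈ z i • A then (A.card : ℝ) else 0) with hF_def
  set D : (Fin k → G) → ℝ := fun z => ∑ x ∈ B, (F z x - k * P x) ^ 2 with hD_def
  set Pi : Finset (Fin k → G) := Fintype.piFinset (fun _ : Fin k => A) with hPi_def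
  have hD0 : ∀ z, 0 ≤ D z := fun z => Finset.sum_nonneg fun x _ => sq_nonneg _
  have hFD : ∀ (z : Fin k → G) (x : G), F z x - k * P x = ∑ i : Fin k, Y x (z i) := by
    intro z x
    simp only [hY_def]
    rw [Finset.sum_sub_distrib, Finset.sum_const, Finset.card_univ, Fintype.card_fin,
      nsmul_eq_mul]
  have hDsum : ∑ z ∈ Pi, D z ≤ (k : ℝ) * (A.card : ℝ) ^ (k + 3) := by
    have hpow : (A.card : ℝ) ^ (k - 1) * (A.card : ℝ) ^ 2 = (A.card : ℝ) ^ (k + 1) := by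
      rw [← pow_add]
      congr 1
    have hinner : ∀ x : G, ∑ z ∈ Pi, (F z x - k * P x) ^ 2
        ≤ (k : ℝ) * ((A.card : ℝ) ^ (k + 1) * P x) := by
      intro x
      have hstep : ∀ z ∈ Pi, (F z x - k * P x) ^ 2
          = ∑ i : Fin k, ∑ j : Fin k, Y x (z i) * Y x (z j) := by
        intro z _
        rw [hFD z x, pow_two, Finset.sum_mul_sum]
      rw [Finset.sum_congr rfl hstep, Finset.sum_comm]
      have hterm : ∀ i : Fin k, ∑ z ∈ Pi, ∑ j : Fin k, Y x (z i) * Y x (z j)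
          ≤ (A.card : ℝ) ^ (k + 1) * P x := by
        intro i
        have hsplit : ∀ z : Fin k → G, ∑ j : Fin k, Y x (z i) * Y x (z j)
            = Y x (z i) * Y x (z i) + ∑ j ∈ Finset.univ.erase i, Y x (z i) * Y x (z j) :=
          fun z => (Finset.add_sum_erase _ _ (Finset.mem_univ i)).symm
        rw [Finset.sum_congr rfl (fun z _ => hsplit z), Finset.sum_add_distrib]
        have hoff : ∑ z ∈ Pi, ∑ j ∈ Finset.univ.erase i, Y x (z i) * Y x (z j) = 0 := by
          rw [Finset.sum_comm]
          refine Finset.sum_eq_zero fun j hj => ?_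
          exact sum_pi_pair' A (Y x) (Y x) i j (Ne.symm (Finset.mem_erase.mp hj).1) (hYsum x)
        have hdiag : ∑ z ∈ Pi, Y x (z i) * Y x (z i)
            ≤ (A.card : ℝ) ^ (k + 1) * P x := by
          rw [hPi_def, sum_pi_single' A (fun a => Y x a * Y x a) i]
          have h1 : ∑ a ∈ A, Y x a * Y x a ≤ (A.card : ℝ) ^ 2 * P x := by
            have := hYsq x
            calc ∑ a ∈ A, Y x a * Y x a = ∑ a ∈ A, (Y x a) ^ 2 := by
                  exact Finset.sum_congr rfl fun a _ => (pow_two _).symm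
              _ ≤ (A.card : ℝ) ^ 2 * P x := this
          calc (A.card : ℝ) ^ (k - 1) * ∑ a ∈ A, Y x a * Y x a
              ≤ (A.card : ℝ) ^ (k - 1) * ((A.card : ℝ) ^ 2 * P x) := by
                apply mul_le_mul_of_nonneg_left h1 (by positivity)
            _ = (A.card : ℝ) ^ (k + 1) * P x := by rw [← mul_assoc, hpow]
        rw [hoff, add_zero]
        exact hdiag
      calc ∑ i : Fin k, ∑ z ∈ Pi, ∑ j : Fin k, Y x (z i) * Y x (z j)
          ≤ (Finset.univ : Finset (Fin k)).card • ((A.card : ℝ) ^ (k + 1) * P x) :=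
            Finset.sum_le_card_nsmul _ _ _ fun i _ => hterm i
        _ = (k : ℝ) * ((A.card : ℝ) ^ (k + 1) * P x) := by
            rw [Finset.card_univ, Fintype.card_fin, nsmul_eq_mul]
    calc ∑ z ∈ Pi, D z = ∑ x ∈ B, ∑ z ∈ Pi, (F z x - k * P x) ^ 2 := by
          simp only [hD_def]
          exact Finset.sum_comm
      _ ≤ ∑ x ∈ B, (k : ℝ) * ((A.card : ℝ) ^ (k + 1) * P x) :=
          Finset.sum_le_sum fun x _ => hinner x
      _ = (k : ℝ) * (A.card : ℝ) ^ (k + 1) * ∑ x ∈ B, (P x : ℝ) := by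
          rw [Finset.mul_sum]
          exact Finset.sum_congr rfl fun x _ => by ring
      _ = (k : ℝ) * (A.card : ℝ) ^ (k + 3) := by
          rw [hPsum, mul_assoc, ← pow_add]
  -- Markov
  set M : ℝ := (k : ℝ) * (A.card : ℝ) ^ 3 with hM_def
  have hMpos : 0 < M := by positivity
  set T : Finset (Fin k → G) := Pi.filter (fun z => D z ≤ 2 * M) with hT_def
  have hTsub : T ⊆ Pi := Finset.filter_subset _ _
  have hPicard : (Pi.card : ℝ) = (A.card : ℝ) ^ k := by
    rw [hPi_def, Fintype.card_piFinset]
    push_cast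
    rw [Finset.prod_const, Finset.card_univ, Fintype.card_fin]
  have hT2 : (A.card : ℝ) ^ k ≤ 2 * T.card := by
    set Bad := Pi.filter (fun z => ¬ D z ≤ 2 * M) with hBad_def
    have hb1 : Bad.card • (2 * M) ≤ ∑ z ∈ Bad, D z :=
      Finset.card_nsmul_le_sum _ _ _ fun z hz =>
        le_of_lt (not_le.mp (Finset.mem_filter.mp hz).2)
    have hb2 : ∑ z ∈ Bad, D z ≤ ∑ z ∈ Pi, D z :=
      Finset.sum_le_sum_of_subset_of_nonneg (Finset.filter_subset _ _) fun z _ _ => hD0 z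
    have hcards : T.card + Bad.card = Pi.card :=
      Finset.card_filter_add_card_filter_not _
    have h4 : (k : ℝ) * (A.card : ℝ) ^ (k + 3) = M * (A.card : ℝ) ^ k := by
      rw [hM_def]
      rw [show k + 3 = 3 + k by ring, pow_add]
      ring
    have h5 : (Bad.card : ℝ) * (2 * M) ≤ M * (A.card : ℝ) ^ k := by
      rw [← h4]
      calc (Bad.card : ℝ) * (2 * M) = Bad.card • (2 * M) := (nsmul_eq_mul _ _).symm
        _ ≤ ∑ z ∈ Bad, D z := hb1
        _ ≤ ∑ z ∈ Pi, D z := hb2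
        _ ≤ (k : ℝ) * (A.card : ℝ) ^ (k + 3) := hDsum
    have h6 : 2 * (Bad.card : ℝ) ≤ (A.card : ℝ) ^ k := by nlinarith
    have h7 : (T.card : ℝ) + Bad.card = (A.card : ℝ) ^ k := by
      rw [← hPicard]
      exact_mod_cast hcards
    linarith
  -- pigeonhole
  set psi : (Fin k → G) → (Fin k → G) := fun z l => (z 0)⁻¹ * z l with hpsi_def
  set Tgt : Finset (Fin k → G) :=
    Fintype.piFinset (fun l : Fin k => if l = 0 then {1} else B) with hTgt_def
  have hmaps : ∀ z ∈ T, psi z ∈ Tgt := by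
    intro z hz
    have hzPi := hTsub hz
    rw [hPi_def, Fintype.mem_piFinset] at hzPi
    rw [hTgt_def, Fintype.mem_piFinset]
    intro l
    by_cases hl : l = 0
    · subst hl
      simp [hpsi_def]
    · simp only [if_neg hl]
      show (z 0)⁻¹ * z l ∈ B
      rw [hB_def]
      exact Finset.mul_mem_mul (hinvmem _ (hzPi 0)) (hzPi l)
  have hTgtcard : (Tgt.card : ℝ) ≤ (K * A.card) ^ (k - 1) := by
    rw [hTgt_def, Fintype.card_piFinset]
    have hcc : ∀ l : Fin k, (if l = 0 then ({1} : Finset G) else B).card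
        = if l = 0 then 1 else B.card := fun l => by split <;> simp
    rw [Finset.prod_congr rfl fun l _ => hcc l,
      ← Finset.mul_prod_erase Finset.univ _ (Finset.mem_univ (0 : Fin k)), if_pos rfl, one_mul,
      Finset.prod_congr rfl
        (fun l hl => if_neg (Finset.mem_erase.mp hl).1 : ∀ l ∈ Finset.univ.erase (0 : Fin k), _),
      Finset.prod_const, Finset.card_erase_of_mem (Finset.mem_univ _), Finset.card_univ,
      Fintype.card_fin]
    push_cast
    exact pow_le_pow_left₀ (Nat.cast_nonneg _) hBcard _
  have hTne : T.Nonempty := by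
    rw [← Finset.card_pos]
    by_contra h
    have h0 : T.card = 0 := by omega
    have : (0:ℝ) < (A.card : ℝ) ^ k := pow_pos hAcpos k
    rw [h0] at hT2
    norm_num at hT2
    linarith
  obtain ⟨z₁, hz₁⟩ := hTne
  obtain ⟨w₀, hw₀Tgt, hw₀max⟩ := Finset.exists_max_image Tgt
    (fun w => (T.filter fun z => psi z = w).card) ⟨psi z₁, hmaps z₁ hz₁⟩
  set Lam : Finset (Fin k → G) := T.filter (fun z => psi z = w₀) with hLam_def
  have hTlam : (T.card : ℝ) ≤ (Tgt.card : ℝ) * Lam.card := by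
    have h1 : T.card ≤ Tgt.card * Lam.card := by
      rw [Finset.card_eq_sum_card_fiberwise hmaps]
      calc ∑ w ∈ Tgt, (T.filter fun z => psi z = w).card
          ≤ Tgt.card • Lam.card := Finset.sum_le_card_nsmul _ _ _ fun w hw => hw₀max w hw
        _ = Tgt.card * Lam.card := by rw [smul_eq_mul]
    exact_mod_cast h1
  have hLamcard : 1 / (2 * K ^ (k - 1)) * A.card ≤ (Lam.card : ℝ) := by
    have hpos : (0:ℝ) < (A.card : ℝ) ^ (k - 1) := pow_pos hAcpos _
    have hLnn : (0:ℝ) ≤ (Lam.card : ℝ) := Nat.cast_nonneg _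
    have h1 : (A.card : ℝ) ^ k ≤ 2 * ((K * A.card) ^ (k - 1) * Lam.card) := by
      calc (A.card : ℝ) ^ k ≤ 2 * T.card := hT2
        _ ≤ 2 * ((Tgt.card : ℝ) * Lam.card) := by linarith
        _ ≤ 2 * ((K * A.card) ^ (k - 1) * Lam.card) := by
            have := mul_le_mul_of_nonneg_right hTgtcard hLnn
            linarith
    have hsplit : (A.card : ℝ) ^ k = A.card * (A.card : ℝ) ^ (k - 1) := by
      rw [← pow_succ']
      congr 1
    have hKA : ((K * A.card : ℝ)) ^ (k - 1) = K ^ (k - 1) * (A.card : ℝ) ^ (k - 1) :=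
      mul_pow _ _ _
    have h2 : (A.card : ℝ) * (A.card : ℝ) ^ (k - 1)
        ≤ (2 * (K ^ (k - 1)) * Lam.card) * (A.card : ℝ) ^ (k - 1) := by
      rw [← hsplit]
      calc (A.card : ℝ) ^ k ≤ 2 * ((K * A.card) ^ (k - 1) * Lam.card) := h1
        _ = (2 * (K ^ (k - 1)) * Lam.card) * (A.card : ℝ) ^ (k - 1) := by rw [hKA]; ring
    have h3 : (A.card : ℝ) ≤ 2 * (K ^ (k - 1)) * Lam.card :=
      le_of_mul_le_mul_right (by linarith [h2]) hpos
    rw [div_mul_eq_mul_div, one_mul, div_le_iff₀ (mul_pos two_pos (pow_pos hKpos _))]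
    linarith
  have hLamne : Lam.Nonempty := by
    rw [← Finset.card_pos]
    by_contra h
    have h0 : Lam.card = 0 := by omega
    have hc1 : (0:ℝ) < 2 * K ^ (k - 1) := mul_pos two_pos (pow_pos hKpos _)
    have h1 : (0:ℝ) < 1 / (2 * K ^ (k - 1)) * A.card :=
      mul_pos (div_pos one_pos hc1) hAcpos
    rw [h0] at hLamcard
    push_cast at hLamcard
    linarith
  obtain ⟨z0, hz0⟩ := hLamne
  have hLamPi : ∀ z ∈ Lam, ∀ l, z l ∈ A := by
    intro z hz l
    have := hTsub (Finset.mem_filter.mp hz).1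
    rw [hPi_def, Fintype.mem_piFinset] at this
    exact this l
  have hLamfib : ∀ z ∈ Lam, ∀ l, z l = (z 0 * (z0 0)⁻¹) * z0 l := by
    intro z hz l
    have h1 : psi z = w₀ := (Finset.mem_filter.mp hz).2
    have h2 : psi z0 = w₀ := (Finset.mem_filter.mp hz0).2
    have h3 : (z 0)⁻¹ * z l = (z0 0)⁻¹ * z0 l := congrFun (h1.trans h2.symm) l
    have h4 := congrArg (fun y => z 0 * y) h3
    simp only [← mul_assoc, mul_inv_cancel, one_mul] at h4
    rw [h4]
  set Sf : Finset G := Lam.image (fun z => z 0 * (z0 0)⁻¹) with hSf_def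
  have hSfcard : Sf.card = Lam.card := by
    rw [hSf_def]
    apply Finset.card_image_of_injOn
    intro z hz z' hz' hzz
    have h0 : z 0 = z' 0 := mul_right_cancel hzz
    funext l
    rw [hLamfib z hz l, hLamfib z' hz' l, h0]
  have hSsubB : ∀ σ ∈ Sf, σ ∈ B := by
    intro σ hσ
    rw [hSf_def] at hσ
    obtain ⟨z, hz, rfl⟩ := Finset.mem_image.mp hσ
    rw [hB_def]
    exact Finset.mul_mem_mul (hLamPi z hz 0) (hinvmem _ (hLamPi z0 hz0 0))
  refine ⟨Sf, ?_, ?_⟩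
  · rw [hSfcard]
    exact hLamcard
  -- part 2 : Sf ^ 8 ⊆ A ^ 4
  have hDLam : ∀ z ∈ Lam, D z ≤ 2 * M := fun z hz =>
    (Finset.mem_filter.mp ((Finset.mem_filter.mp hz).1)).2
  have hqsupp : ∀ x : G, (P x : ℝ) ≠ 0 → x ∈ B := by
    intro x hx
    apply hPmem
    by_contra h
    exact hx (by simp [Nat.eq_zero_of_not_pos h])
  have hFsupp : ∀ z ∈ Lam, ∀ x : G, F z x ≠ 0 → x ∈ B := by
    intro z hz x hx
    simp only [hF_def] at hx
    obtain ⟨i, -, hi⟩ := Finset.exists_ne_zero_of_sum_ne_zero hx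
    by_cases hxi : x ∈ z i • A
    · exact hBA _ (hLamPi z hz i) hxi
    · rw [if_neg hxi] at hi
      exact absurd rfl hi
  have hshift : ∀ z ∈ Lam, ∀ y : G, F z y = F z0 ((z 0 * (z0 0)⁻¹)⁻¹ * y) := by
    intro z hz y
    simp only [hF_def]
    refine Finset.sum_congr rfl fun i _ => ?_
    refine if_congr ?_ rfl rfl
    have helt : ((z 0 * (z0 0)⁻¹) * z0 i)⁻¹ * y = (z0 i)⁻¹ * ((z 0 * (z0 0)⁻¹)⁻¹ * y) := by
      group
    rw [hLamfib z hz i, hmem, hmem, helt]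
  set R : G → ℝ := fun σ => ∑ y ∈ A ^ 4, ((k:ℝ) * P (σ⁻¹ * y) - k * P y) ^ 2 with hR_def
  have hRS : ∀ σ ∈ Sf, R σ ≤ 8 * M := by
    intro σ hσ
    obtain ⟨z, hz, rfl⟩ := Finset.mem_image.mp hσ
    have hσB : z 0 * (z0 0)⁻¹ ∈ B := hSsubB _ hσ
    have htrans : ∑ y ∈ A ^ 4,
        ((k:ℝ) * P ((z 0 * (z0 0)⁻¹)⁻¹ * y) - F z0 ((z 0 * (z0 0)⁻¹)⁻¹ * y)) ^ 2
        = ∑ x ∈ B, ((k:ℝ) * P x - F z0 x) ^ 2 := by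
      apply sum_translate' (fun x => ((k:ℝ) * P x - F z0 x) ^ 2) B (A ^ 4) (z 0 * (z0 0)⁻¹)
      · intro x hx
        by_contra hxB
        apply hx
        have h1 : (P x : ℝ) = 0 := by
          by_contra h0; exact hxB (hqsupp x h0)
        have h2 : F z0 x = 0 := by
          by_contra h0; exact hxB (hFsupp z0 hz0 x h0)
        rw [h1, h2]; ring
      · intro v hv
        rw [hB4]
        exact Finset.mul_mem_mul hσB hv
    have hD0' : ∑ x ∈ B, ((k:ℝ) * P x - F z0 x) ^ 2 = D z0 := by
      simp only [hD_def]
      exact Finset.sum_congr rfl fun x _ => by ring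
    have hsecond : ∑ y ∈ A ^ 4, (F z y - (k:ℝ) * P y) ^ 2 = D z := by
      simp only [hD_def]
      refine (Finset.sum_subset hBsubA4 ?_).symm
      intro x _ hxB
      have h1 : (P x : ℝ) = 0 := by
        by_contra h0; exact hxB (hqsupp x h0)
      have h2 : F z x = 0 := by
        by_contra h0; exact hxB (hFsupp z hz x h0)
      rw [h1, h2]
      ring
    have hpt : ∀ y ∈ A ^ 4, ((k:ℝ) * P ((z 0 * (z0 0)⁻¹)⁻¹ * y) - k * P y) ^ 2
        ≤ 2 * ((k:ℝ) * P ((z 0 * (z0 0)⁻¹)⁻¹ * y) - F z0 ((z 0 * (z0 0)⁻¹)⁻¹ * y)) ^ 2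
          + 2 * (F z y - (k:ℝ) * P y) ^ 2 := by
      intro y _
      rw [hshift z hz y]
      nlinarith [sq_nonneg (((k:ℝ) * P ((z 0 * (z0 0)⁻¹)⁻¹ * y)
        - F z0 ((z 0 * (z0 0)⁻¹)⁻¹ * y)) - (F z0 ((z 0 * (z0 0)⁻¹)⁻¹ * y) - (k:ℝ) * P y))]
    show R (z 0 * (z0 0)⁻¹) ≤ 8 * M
    simp only [hR_def]
    calc ∑ y ∈ A ^ 4, ((k:ℝ) * P ((z 0 * (z0 0)⁻¹)⁻¹ * y) - k * P y) ^ 2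
        ≤ ∑ y ∈ A ^ 4, (2 * ((k:ℝ) * P ((z 0 * (z0 0)⁻¹)⁻¹ * y)
            - F z0 ((z 0 * (z0 0)⁻¹)⁻¹ * y)) ^ 2 + 2 * (F z y - (k:ℝ) * P y) ^ 2) :=
          Finset.sum_le_sum hpt
      _ = 2 * (∑ y ∈ A ^ 4, ((k:ℝ) * P ((z 0 * (z0 0)⁻¹)⁻¹ * y)
            - F z0 ((z 0 * (z0 0)⁻¹)⁻¹ * y)) ^ 2)
          + 2 * (∑ y ∈ A ^ 4, (F z y - (k:ℝ) * P y) ^ 2) := by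
          rw [Finset.sum_add_distrib, Finset.mul_sum, Finset.mul_sum]
      _ = 2 * D z0 + 2 * D z := by rw [htrans, hD0', hsecond]
      _ ≤ 8 * M := by
          have hd1 := hDLam z hz
          have hd2 := hDLam z0 hz0
          linarith
  -- the containment
  intro s hs
  rw [Finset.mem_pow] at hs
  obtain ⟨f, hf⟩ := hs
  by_contra hsA4
  set sig : ℕ → G := fun j => if h : j < 8 then (f ⟨j, h⟩ : G) else 1 with hsig_def
  have hsigS : ∀ j, j < 8 → sig j ∈ Sf := by
    intro j hj
    simp only [hsig_def, dif_pos hj]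
    exact Finset.coe_mem _
  set t : ℕ → G := fun j => ((List.ofFn fun i => ((f i : G))).take j).prod with ht_def
  have ht0 : t 0 = 1 := by simp [ht_def]
  have htsucc : ∀ j, j < 8 → t (j + 1) = t j * sig j := by
    intro j hj
    have hlen : j < (List.ofFn fun i => ((f i : G))).length := by simp [hj]
    simp only [ht_def]
    rw [List.prod_take_succ _ _ hlen]
    congr 1
    rw [List.getElem_ofFn]
    simp only [hsig_def, dif_pos hj]
  have hts : t 8 = s := by
    simp only [ht_def]
    rw [List.take_of_length_le (by simp)]
    exact hf
  have htm : ∀ j, j ≤ 8 → t j ∈ A ^ (2 * j) := by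
    intro j
    induction j with
    | zero =>
      intro _
      simpa [ht_def] using Finset.one_mem_one
    | succ n ih =>
      intro hn
      rw [htsucc n (by omega), show 2 * (n + 1) = 2 * n + 2 by ring, pow_add]
      refine Finset.mul_mem_mul (ih (by omega)) ?_
      rw [pow_two, ← hB_def]
      exact hSsubB _ (hsigS n (by omega))
  have htm14 : ∀ j, j ≤ 7 → t j ∈ A ^ 14 := fun j hj =>
    Finset.pow_subset_pow_right hA1 (by omega : 2 * j ≤ 14) (htm j (by omega))
  have hA18 : ∀ j, j ≤ 7 → ∀ v ∈ A ^ 4, t j * v ∈ A ^ 18 := by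
    intro j hj v hv
    rw [show (18:ℕ) = 14 + 4 by norm_num, pow_add]
    exact Finset.mul_mem_mul (htm14 j hj) hv
  have hBsub18 : B ⊆ A ^ 18 := by
    rw [hB_def, ← pow_two]
    exact Finset.pow_subset_pow_right hA1 (by norm_num)
  have hsupp4 : ∀ j, j < 8 → ∀ y : G,
      ((k:ℝ) * P ((sig j)⁻¹ * y) - k * P y) ^ 2 ≠ 0 → y ∈ A ^ 4 := by
    intro j hj y hy
    by_contra hyA4
    apply hy
    have h1 : (P y : ℝ) = 0 := by
      by_contra h0
      exact hyA4 (hBsubA4 (hqsupp y h0))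
    have h2 : (P ((sig j)⁻¹ * y) : ℝ) = 0 := by
      by_contra h0
      have hyB : (sig j)⁻¹ * y ∈ B := hqsupp _ h0
      apply hyA4
      rw [hB4]
      have hyy : y = sig j * ((sig j)⁻¹ * y) := by group
      rw [hyy]
      exact Finset.mul_mem_mul (hSsubB _ (hsigS j hj)) hyB
    rw [h1, h2]
    ring
  have hjsum : ∀ j, j < 8 →
      ∑ x ∈ A ^ 18, ((k:ℝ) * P ((t (j + 1))⁻¹ * x) - k * P ((t j)⁻¹ * x)) ^ 2 = R (sig j) := by
    intro j hj
    have heq : ∀ x : G, ((k:ℝ) * P ((t (j + 1))⁻¹ * x) - k * P ((t j)⁻¹ * x)) ^ 2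
        = ((k:ℝ) * P ((sig j)⁻¹ * ((t j)⁻¹ * x)) - k * P ((t j)⁻¹ * x)) ^ 2 := by
      intro x
      rw [htsucc j hj, mul_inv_rev, mul_assoc]
    rw [Finset.sum_congr rfl fun x _ => heq x]
    simp only [hR_def]
    exact sum_translate' (fun y => ((k:ℝ) * P ((sig j)⁻¹ * y) - k * P y) ^ 2)
      (A ^ 4) (A ^ 18) (t j) (hsupp4 j hj) (hA18 j (by omega))
  have hptCS : ∀ x : G, ((k:ℝ) * P (s⁻¹ * x) - k * P x) ^ 2
      ≤ 8 * ∑ j ∈ Finset.range 8,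
        ((k:ℝ) * P ((t (j + 1))⁻¹ * x) - k * P ((t j)⁻¹ * x)) ^ 2 := by
    intro x
    have htel : ∑ j ∈ Finset.range 8,
        ((k:ℝ) * P ((t (j + 1))⁻¹ * x) - k * P ((t j)⁻¹ * x))
        = (k:ℝ) * P (s⁻¹ * x) - k * P x := by
      rw [Finset.sum_range_sub (fun j => (k:ℝ) * P ((t j)⁻¹ * x)) 8, hts, ht0]
      norm_num
    have hcs := Finset.sum_mul_sq_le_sq_mul_sq (Finset.range 8)
      (fun j => (k:ℝ) * P ((t (j + 1))⁻¹ * x) - k * P ((t j)⁻¹ * x)) (fun _ => (1:ℝ))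
    simp only [mul_one, one_pow, Finset.sum_const, Finset.card_range, nsmul_eq_mul] at hcs
    rw [htel] at hcs
    linarith
  have hub : ∑ x ∈ A ^ 18, ((k:ℝ) * P (s⁻¹ * x) - k * P x) ^ 2 ≤ 512 * M := by
    calc ∑ x ∈ A ^ 18, ((k:ℝ) * P (s⁻¹ * x) - k * P x) ^ 2
        ≤ ∑ x ∈ A ^ 18, 8 * ∑ j ∈ Finset.range 8,
            ((k:ℝ) * P ((t (j + 1))⁻¹ * x) - k * P ((t j)⁻¹ * x)) ^ 2 :=
          Finset.sum_le_sum fun x _ => hptCS x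
      _ = 8 * ∑ j ∈ Finset.range 8, ∑ x ∈ A ^ 18,
            ((k:ℝ) * P ((t (j + 1))⁻¹ * x) - k * P ((t j)⁻¹ * x)) ^ 2 := by
          rw [← Finset.mul_sum, Finset.sum_comm]
      _ ≤ 8 * ∑ j ∈ Finset.range 8, 8 * M := by
          refine mul_le_mul_of_nonneg_left ?_ (by norm_num)
          refine Finset.sum_le_sum fun j hj => ?_
          rw [hjsum j (Finset.mem_range.mp hj)]
          exact hRS _ (hsigS j (Finset.mem_range.mp hj))
      _ = 512 * M := by
          rw [Finset.sum_const, Finset.card_range, nsmul_eq_mul]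
          ring
  have hdis : ∀ x : G, ((k:ℝ) * P (s⁻¹ * x)) * ((k:ℝ) * P x) = 0 := by
    intro x
    by_contra hne
    have h1 : (P (s⁻¹ * x) : ℝ) ≠ 0 := fun h0 => hne (by rw [h0]; ring)
    have h2 : (P x : ℝ) ≠ 0 := fun h0 => hne (by rw [h0]; ring)
    apply hsA4
    rw [hB4]
    have hx : x ∈ B := hqsupp x h2
    have hsx : s⁻¹ * x ∈ B := hqsupp _ h1
    have hss : s = x * (s⁻¹ * x)⁻¹ := by group
    rw [hss]
    refine Finset.mul_mem_mul hx ?_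
    rw [← hBinv]
    exact Finset.inv_mem_inv hsx
  have hlow1 : ∀ x : G, ((k:ℝ) * P x) ^ 2 ≤ ((k:ℝ) * P (s⁻¹ * x) - k * P x) ^ 2 := by
    intro x
    nlinarith [hdis x, sq_nonneg ((k:ℝ) * P (s⁻¹ * x))]
  have hlow2 : ∑ x ∈ B, ((k:ℝ) * P x) ^ 2
      ≤ ∑ x ∈ A ^ 18, ((k:ℝ) * P (s⁻¹ * x) - k * P x) ^ 2 := by
    calc ∑ x ∈ B, ((k:ℝ) * P x) ^ 2 ≤ ∑ x ∈ A ^ 18, ((k:ℝ) * P x) ^ 2 :=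
          Finset.sum_le_sum_of_subset_of_nonneg hBsub18 fun x _ _ => sq_nonneg _
      _ ≤ ∑ x ∈ A ^ 18, ((k:ℝ) * P (s⁻¹ * x) - k * P x) ^ 2 :=
          Finset.sum_le_sum fun x _ => hlow1 x
  have hCS2 := Finset.sum_mul_sq_le_sq_mul_sq B (fun x => (k:ℝ) * P x) (fun _ => (1:ℝ))
  simp only [mul_one, one_pow, Finset.sum_const, nsmul_eq_mul] at hCS2
  have hsum1 : ∑ x ∈ B, (k:ℝ) * P x = (k:ℝ) * (A.card:ℝ) ^ 2 := by
    rw [← Finset.mul_sum, hPsum]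
  rw [hsum1] at hCS2
  have hBnn : (0:ℝ) ≤ (B.card : ℝ) := Nat.cast_nonneg _
  have hMnn : (0:ℝ) ≤ 512 * M := by linarith
  have hfin2 : ((k:ℝ) * (A.card:ℝ) ^ 2) ^ 2 ≤ 512 * M * (K * A.card) := by
    calc ((k:ℝ) * (A.card:ℝ) ^ 2) ^ 2
        ≤ (∑ x ∈ B, ((k:ℝ) * P x) ^ 2) * (B.card : ℝ) := hCS2
      _ ≤ (∑ x ∈ A ^ 18, ((k:ℝ) * P (s⁻¹ * x) - k * P x) ^ 2) * (B.card : ℝ) :=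
          mul_le_mul_of_nonneg_right hlow2 hBnn
      _ ≤ 512 * M * (B.card : ℝ) := mul_le_mul_of_nonneg_right hub hBnn
      _ ≤ 512 * M * (K * A.card) := mul_le_mul_of_nonneg_left hBcard hMnn
  have hpos4 : (0:ℝ) < (k:ℝ) * (A.card:ℝ) ^ 4 := mul_pos hkpos (pow_pos hAcpos 4)
  have e1 : ((k:ℝ) * (A.card:ℝ) ^ 2) ^ 2 = (k:ℝ) * ((k:ℝ) * (A.card:ℝ) ^ 4) := by ring
  have e2 : 512 * M * (K * A.card) = (512 * K) * ((k:ℝ) * (A.card:ℝ) ^ 4) := by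
    rw [hM_def]
    ring
  rw [e1, e2] at hfin2
  have hk512 : (k:ℝ) ≤ 512 * K := le_of_mul_le_mul_right hfin2 hpos4
  linarith
end
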